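/- arXiv:2001.02205 — 9 statements merged into one kernel-verified Lean document; each statement's English description precedes it below -/
import Mathlib

section
/- If ω is a community of a multipartite process, then the marginal distribution over X_ω evolves as a self-contained continuous-time Markov chain: d p_{x_ω}/dt = Σ_{x'_ω} K^{x'_ω}_{x_ω}(ω) p_{x'_ω}, where K(ω) := Σ_{i∈ω} K(i) depends only on the coordinates in ω. -/
open Finset

/-- If `ω` is a community of a multipartite process, then the marginal
distribution over `X_ω` evolves as a self-contained CTMC:
`d p_{x_ω}/dt = Σ_{x'_ω} K^{x'_ω}_{x_ω}(ω) p_{x'_ω}`.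
Here `K i` are the subsystem rate matrices (multipartite: `K i x' x = 0` if a
coordinate other than `i` changes; zero row sums), and the community condition
is that the windowed rate matrix `K(ω) = Σ_{i∈ω} K i` agrees, on pairs of joint
states with equal coordinates outside `ω`, with a rate matrix `Kω` defined on
the restricted state space `X_ω`.  The LHS is the time derivative of the
marginal probability of the community state `z`. -/
theorem community_marginal_is_CTMC
    {N : Type} [Fintype N] [DecidableEq N]
    (X : N → Type) [∀ i, Fintype (X i)] [∀ i, DecidableEq (X i)]
    (K : N → (∀ j, X j) → (∀ j, X j) → ℝ)
    (p : (∀ j, X j) → ℝ)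
    (hmulti : ∀ i x' x, (∃ j, j ≠ i ∧ x' j ≠ x j) → K i x' x = 0)
    (hrow : ∀ i x', ∑ x, K i x' x = 0)
    (ω : Finset N)
    (Kω : (∀ j : {j // j ∈ ω}, X j.1) → (∀ j : {j // j ∈ ω}, X j.1) → ℝ)
    (hcomm : ∀ x' x : ∀ j, X j, (∀ j ∉ ω, x' j = x j) →
      ∑ i ∈ ω, K i x' x = Kω (fun j => x' j.1) (fun j => x j.1))
    (z : ∀ j : {j // j ∈ ω}, X j.1) :
    ∑ x ∈ univ.filter (fun x : ∀ j, X j => ∀ j : {j // j ∈ ω}, x j.1 = z j),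
        ∑ x' : ∀ j, X j, ∑ j : N, K j x' x * p x'
      = ∑ z' : ∀ j : {j // j ∈ ω}, X j.1, Kω z' z *
          ∑ x' ∈ univ.filter (fun x' : ∀ j, X j => ∀ j : {j // j ∈ ω}, x' j.1 = z' j),
            p x' := by
  classical
  have key : ∀ x' : ∀ j, X j,
      (∑ x ∈ univ.filter (fun x : ∀ j, X j => ∀ j : {j // j ∈ ω}, x j.1 = z j),
        ∑ j : N, K j x' x) = Kω (fun j => x' j.1) z := by
    intro x'
    rw [Finset.sum_comm]
    have h0 : ∀ j ∈ (univ : Finset N), j ∉ ω →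
        (∑ x ∈ univ.filter (fun x : ∀ j, X j => ∀ j : {j // j ∈ ω}, x j.1 = z j),
          K j x' x) = 0 := by
      intro j _ hj
      by_cases hx' : ∀ k : {k // k ∈ ω}, x' k.1 = z k
      · have heq : (∑ x ∈ univ.filter
            (fun x : ∀ j, X j => ∀ j : {j // j ∈ ω}, x j.1 = z j), K j x' x)
            = ∑ x, K j x' x := by
          apply Finset.sum_subset (Finset.filter_subset _ _)
          intro x _ hx
          rw [Finset.mem_filter] at hx
          push_neg at hx
          obtain ⟨k, hk⟩ := hx (Finset.mem_univ x)
          exact hmulti j x' x ⟨k.1, fun h => hj (h ▸ k.2),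
            fun h => hk (by rw [← h, hx' k])⟩
        rw [heq]; exact hrow j x'
      · push_neg at hx'
        obtain ⟨k, hk⟩ := hx'
        apply Finset.sum_eq_zero
        intro x hx
        rw [Finset.mem_filter] at hx
        exact hmulti j x' x ⟨k.1, fun h => hj (h ▸ k.2), by rw [hx.2 k]; exact hk⟩
    rw [← Finset.sum_subset (Finset.subset_univ ω) h0, Finset.sum_comm]
    set g : ∀ j, X j := fun j => if h : j ∈ ω then z ⟨j, h⟩ else x' j with hg
    have hgS : g ∈ univ.filter (fun x : ∀ j, X j => ∀ j : {j // j ∈ ω}, x j.1 = z j) := by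
      rw [Finset.mem_filter]
      refine ⟨Finset.mem_univ _, fun j => ?_⟩
      simp only [hg, dif_pos j.2]
    have hsingle : (∑ x ∈ univ.filter
        (fun x : ∀ j, X j => ∀ j : {j // j ∈ ω}, x j.1 = z j),
        ∑ j ∈ ω, K j x' x) = ∑ j ∈ ω, K j x' g := by
      apply Finset.sum_eq_single g
      · intro b hb hbg
        rw [Finset.mem_filter] at hb
        have : ∃ j0, b j0 ≠ g j0 := by
          by_contra h
          push_neg at h
          exact hbg (funext h)
        obtain ⟨j0, hj0⟩ := this
        have hj0ω : j0 ∉ ω := by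
          intro hmem
          apply hj0
          rw [hb.2 ⟨j0, hmem⟩]
          simp only [hg, dif_pos hmem]
        have hgj0 : g j0 = x' j0 := by simp only [hg, dif_neg hj0ω]
        apply Finset.sum_eq_zero
        intro i hi
        exact hmulti i x' b ⟨j0, fun h => hj0ω (h ▸ hi), fun h => hj0 ((hgj0 ▸ h).symm)⟩
      · intro h; exact absurd hgS h
    rw [hsingle]
    have houter : ∀ j ∉ ω, x' j = g j := by
      intro j hj; simp only [hg, dif_neg hj]
    rw [hcomm x' g houter]
    congr 1
    funext j
    simp only [hg, dif_pos j.2]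
  rw [Finset.sum_comm]
  have hL : (∑ x' : ∀ j, X j, ∑ x ∈ univ.filter
      (fun x : ∀ j, X j => ∀ j : {j // j ∈ ω}, x j.1 = z j),
      ∑ j : N, K j x' x * p x')
      = ∑ x' : ∀ j, X j, Kω (fun j => x' j.1) z * p x' := by
    refine Finset.sum_congr rfl fun x' _ => ?_
    rw [← key x', Finset.sum_mul]
    exact Finset.sum_congr rfl fun x _ => (Finset.sum_mul _ _ _).symm
  rw [hL]
  have hR : ∀ z' : ∀ j : {j // j ∈ ω}, X j.1,
      Kω z' z * (∑ x' ∈ univ.filter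
        (fun x' : ∀ j, X j => ∀ j : {j // j ∈ ω}, x' j.1 = z' j), p x')
      = ∑ x' ∈ univ.filter
          (fun x' : ∀ j, X j => (fun j : {j // j ∈ ω} => x' j.1) = z'),
          Kω (fun j => x' j.1) z * p x' := by
    intro z'
    rw [Finset.mul_sum]
    apply Finset.sum_congr
    · apply Finset.filter_congr
      intro x _
      simp [funext_iff]
    · intro x hx
      rw [Finset.mem_filter] at hx
      rw [hx.2]
  rw [Finset.sum_congr rfl fun z' _ => hR z']
  exact (Finset.sum_fiberwise univ (fun x' : ∀ j, X j => fun j : {j // j ∈ ω} => x' j.1)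
    (fun x' => Kω (fun j => x' j.1) z * p x')).symm
end

section
/- If A is a community, then the counterfactual global EP rate Σ_{x,x'} K^{x'}_x(A) p_{x'} ln[K^{x'}_x(A) p_{x'} / (K^x_{x'}(A) p_x)] equals the marginalized expression Σ_{x_A, x'_A} K^{x'_A}_{x_A}(A) p_{x'_A} ln[K^{x'_A}_{x_A}(A) p_{x'_A}/(K^{x_A}_{x'_A}(A) p_{x_A})] plus the A-windowed derivative of the conditional entropy −Σ_{x,x'} K^{x'}_x(A) p_{x'} ln p_{x|x_A}. -/
open Finset

lemma EPaux_log_split {c d u v P Q : ℝ} (hc : 0 < c) (hd : 0 < d)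
    (hu : 0 < u) (hv : 0 < v) (hP : 0 < P) (hQ : 0 < Q) :
    Real.log (c * u / (d * v))
      = Real.log (c * P / (d * Q)) + Real.log (u / P) - Real.log (v / Q) := by
  rw [Real.log_div (mul_pos hc hu).ne' (mul_pos hd hv).ne',
    Real.log_div (mul_pos hc hP).ne' (mul_pos hd hQ).ne',
    Real.log_div hu.ne' hP.ne', Real.log_div hv.ne' hQ.ne',
    Real.log_mul hc.ne' hu.ne', Real.log_mul hc.ne' hP.ne',
    Real.log_mul hd.ne' hv.ne', Real.log_mul hd.ne' hQ.ne']
  ring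

lemma EPaux_sum_split {XA : Type} [Fintype XA] [DecidableEq XA] (a' : XA) (f : XA → ℝ) :
    ∑ a, f a = f a' + ∑ a, if a' = a then 0 else f a := by
  have h : f a' = ∑ a, if a' = a then f a else 0 := by
    rw [Finset.sum_ite_eq]; simp
  rw [h, ← Finset.sum_add_distrib]
  exact Finset.sum_congr rfl fun a _ => by by_cases h : a' = a <;> simp [h]

/-- If `A` is a community of a multipartite process on `X = X_A × X_B`
(so `K x' x = K_A x'_A x_A δ(x'_B, x_B)`), then the counterfactual global EP
rate under `K(A)` equals the marginalized (local) EP rate on `X_A` plus the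
`A`-windowed derivative of the conditional entropy
`−Σ_{x,x'} K x' x p x' ln p_{x|x_A}`.  `KA` is a valid community rate matrix
(zero row sums, non-negative off-diagonal entries, and off-diagonal positivity
of `KA a' a` iff that of `KA a a'`), and `p` is a strictly positive joint
distribution with `A`-marginal `pA`. -/
theorem counterfactual_EP_equals_marginal_EP_plus_windowed
    {XA XB : Type} [Fintype XA] [Fintype XB] [DecidableEq XA] [DecidableEq XB]
    (KA : XA → XA → ℝ)
    (hoff : ∀ a' a, a' ≠ a → 0 ≤ KA a' a)
    (hrow : ∀ a', ∑ a, KA a' a = 0)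
    (hiff : ∀ a' a, a' ≠ a → (0 < KA a' a ↔ 0 < KA a a'))
    (p : XA × XB → ℝ) (hp : ∀ x, 0 < p x) (hp1 : ∑ x, p x = 1)
    (K : XA × XB → XA × XB → ℝ)
    (hK : ∀ x' x, K x' x = if x'.2 = x.2 then KA x'.1 x.1 else 0)
    (pA : XA → ℝ) (hpA : ∀ a, pA a = ∑ b, p (a, b)) :
    (∑ x' : XA × XB, ∑ x : XA × XB, if x' = x then 0 else
        K x' x * p x' * Real.log (K x' x * p x' / (K x x' * p x)))
      = (∑ a' : XA, ∑ a : XA, if a' = a then 0 else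
          KA a' a * pA a' * Real.log (KA a' a * pA a' / (KA a a' * pA a)))
        + (-∑ x' : XA × XB, ∑ x : XA × XB,
            K x' x * p x' * Real.log (p x / pA x.1)) := by
  -- XB nonempty
  have hXB : Nonempty XB := by
    by_contra h
    rw [not_nonempty_iff] at h
    simp at hp1
  have hpApos : ∀ a, 0 < pA a := fun a => by
    rw [hpA]
    exact Finset.sum_pos (fun b _ => hp (a, b)) Finset.univ_nonempty
  -- abbreviations
  set t1 : XA → XA → XB → ℝ := fun a' a b =>
    KA a' a * p (a', b) * Real.log (KA a' a * pA a' / (KA a a' * pA a)) with ht1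
  set t2 : XA → XA → XB → ℝ := fun a' a b =>
    KA a' a * p (a', b) * Real.log (p (a', b) / pA a') with ht2
  set t3 : XA → XA → XB → ℝ := fun a' a b =>
    KA a' a * p (a', b) * Real.log (p (a, b) / pA a) with ht3
  -- Step 1: LHS as triple sum
  have hLHS : (∑ x' : XA × XB, ∑ x : XA × XB, if x' = x then 0 else
        K x' x * p x' * Real.log (K x' x * p x' / (K x x' * p x)))
      = ∑ a' : XA, ∑ a : XA, ∑ b : XB, (if a' = a then 0 else
          KA a' a * p (a', b) * Real.log (KA a' a * p (a', b) / (KA a a' * p (a, b)))) := by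
    simp only [Fintype.sum_prod_type]
    refine Finset.sum_congr rfl fun a' _ => ?_
    rw [Finset.sum_comm]
    refine Finset.sum_congr rfl fun a _ => ?_
    refine Finset.sum_congr rfl fun b' _ => ?_
    rw [Finset.sum_eq_single b']
    · simp [hK, Prod.ext_iff]
    · intro b _ hb
      have hb' : ¬ b' = b := fun h => hb h.symm
      simp [hK, Prod.ext_iff, hb']
    · simp
  -- Step 2: pointwise split of LHS summand
  have hsplit : ∀ a' a b, (if a' = a then 0 else
        KA a' a * p (a', b) * Real.log (KA a' a * p (a', b) / (KA a a' * p (a, b))))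
      = (if a' = a then 0 else t1 a' a b)
        + ((if a' = a then 0 else t2 a' a b) - (if a' = a then 0 else t3 a' a b)) := by
    intro a' a b
    by_cases h : a' = a
    · simp [h]
    · simp only [if_neg h]
      rcases (hoff a' a h).eq_or_lt with hc | hc
      · simp [ht1, ht2, ht3, ← hc]
      · have hd : 0 < KA a a' := (hiff a' a h).mp hc
        rw [EPaux_log_split hc hd (hp (a', b)) (hp (a, b)) (hpApos a') (hpApos a)]
        simp only [ht1, ht2, ht3]
        ring
  -- Step 3: first RHS term equals sum of t1
  have hT1 : (∑ a' : XA, ∑ a : XA, if a' = a then 0 else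
        KA a' a * pA a' * Real.log (KA a' a * pA a' / (KA a a' * pA a)))
      = ∑ a' : XA, ∑ a : XA, ∑ b : XB, (if a' = a then 0 else t1 a' a b) := by
    refine Finset.sum_congr rfl fun a' _ => Finset.sum_congr rfl fun a _ => ?_
    by_cases h : a' = a
    · simp [h]
    · simp only [if_neg h, ht1]
      rw [hpA, Finset.mul_sum, Finset.sum_mul]
  -- Step 4: second RHS sum equals T3 - T2
  have hT23 : (∑ x' : XA × XB, ∑ x : XA × XB, K x' x * p x' * Real.log (p x / pA x.1))
      = (∑ a' : XA, ∑ a : XA, ∑ b : XB, (if a' = a then 0 else t3 a' a b))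
        - (∑ a' : XA, ∑ a : XA, ∑ b : XB, (if a' = a then 0 else t2 a' a b)) := by
    have step : (∑ x' : XA × XB, ∑ x : XA × XB, K x' x * p x' * Real.log (p x / pA x.1))
        = ∑ a' : XA, ∑ b : XB, ∑ a : XA, KA a' a * p (a', b) * Real.log (p (a, b) / pA a) := by
      simp only [Fintype.sum_prod_type]
      refine Finset.sum_congr rfl fun a' _ => Finset.sum_congr rfl fun b' _ =>
        Finset.sum_congr rfl fun a _ => ?_
      rw [Finset.sum_eq_single b']
      · simp [hK]
      · intro b _ hb
        have hb' : ¬ b' = b := fun h => hb h.symm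
        simp [hK, hb']
      · simp
    rw [step]
    have inner : ∀ a' b, (∑ a : XA, KA a' a * p (a', b) * Real.log (p (a, b) / pA a))
        = (∑ a : XA, (if a' = a then 0 else t3 a' a b))
          - (∑ a : XA, (if a' = a then 0 else t2 a' a b)) := by
      intro a' b
      rw [EPaux_sum_split a' (fun a => KA a' a * p (a', b) * Real.log (p (a, b) / pA a))]
      have hdiag : KA a' a' = -∑ a, (if a' = a then 0 else KA a' a) := by
        have := EPaux_sum_split a' (KA a')
        rw [hrow a'] at this
        linarith
      have : KA a' a' * p (a', b) * Real.log (p (a', b) / pA a')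
          = -∑ a, (if a' = a then 0 else t2 a' a b) := by
        rw [hdiag, neg_mul, neg_mul, neg_inj, Finset.sum_mul, Finset.sum_mul]
        refine Finset.sum_congr rfl fun a _ => ?_
        by_cases h : a' = a <;> simp [h, ht2]
      rw [this]
      simp only [ht3]
      ring
    calc ∑ a' : XA, ∑ b : XB, ∑ a : XA, KA a' a * p (a', b) * Real.log (p (a, b) / pA a)
        = ∑ a' : XA, ∑ b : XB, ((∑ a : XA, (if a' = a then 0 else t3 a' a b))
            - (∑ a : XA, (if a' = a then 0 else t2 a' a b))) := by
          exact Finset.sum_congr rfl fun a' _ => Finset.sum_congr rfl fun b _ => inner a' b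
      _ = (∑ a' : XA, ∑ a : XA, ∑ b : XB, (if a' = a then 0 else t3 a' a b))
            - (∑ a' : XA, ∑ a : XA, ∑ b : XB, (if a' = a then 0 else t2 a' a b)) := by
          simp only [Finset.sum_sub_distrib]
          congr 1 <;> exact Finset.sum_congr rfl fun a' _ => Finset.sum_comm
  -- assemble
  rw [hLHS, hT1, hT23]
  have : (∑ a' : XA, ∑ a : XA, ∑ b : XB, (if a' = a then 0 else
          KA a' a * p (a', b) * Real.log (KA a' a * p (a', b) / (KA a a' * p (a, b)))))
      = (∑ a' : XA, ∑ a : XA, ∑ b : XB, (if a' = a then 0 else t1 a' a b))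
        + ((∑ a' : XA, ∑ a : XA, ∑ b : XB, (if a' = a then 0 else t2 a' a b))
          - (∑ a' : XA, ∑ a : XA, ∑ b : XB, (if a' = a then 0 else t3 a' a b))) := by
    simp only [hsplit, Finset.sum_add_distrib, Finset.sum_sub_distrib]
  rw [this]
  ring
end

section
/- If A is a community, then the A-windowed derivative of the conditional entropy, d^A S^{X|X_A}/dt = −Σ_{x,x'} K^{x'}_x(A) p_{x'} ln p_{x|x_A}, is non-negative. -/
open Finset

/-- If `A` is a community of a multipartite process on `X = X_A × X_B`
(so `K x' x = K_A x'_A x_A δ(x'_B, x_B)` with `KA` a valid rate matrix on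
`X_A`: non-negative off-diagonal entries, zero row sums), then the
`A`-windowed derivative of the conditional entropy,
`d^A S^{X|X_A}/dt = −Σ_{x,x'} K x' x p x' ln p_{x|x_A}`, is non-negative.
Here `p` is a strictly positive distribution on `X` and
`p_{x|x_A} = p x / p_A x_A`. -/
theorem windowed_conditional_entropy_derivative_nonneg
    {XA XB : Type} [Fintype XA] [Fintype XB] [DecidableEq XA] [DecidableEq XB]
    (KA : XA → XA → ℝ)
    (hoff : ∀ a' a, a' ≠ a → 0 ≤ KA a' a)
    (hrow : ∀ a', ∑ a, KA a' a = 0)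
    (p : XA × XB → ℝ) (hp : ∀ x, 0 < p x) (hp1 : ∑ x, p x = 1)
    (K : XA × XB → XA × XB → ℝ)
    (hK : ∀ x' x, K x' x = if x'.2 = x.2 then KA x'.1 x.1 else 0)
    (pA : XA → ℝ) (hpA : ∀ a, pA a = ∑ b, p (a, b)) :
    0 ≤ -∑ x' : XA × XB, ∑ x : XA × XB,
          K x' x * p x' * Real.log (p x / pA x.1) := by
  have hXB : Nonempty XB := by
    by_contra h
    rw [not_nonempty_iff] at h
    simp at hp1
  have hpA_pos : ∀ a, 0 < pA a := by
    intro a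
    rw [hpA]
    exact Finset.sum_pos (fun b _ => hp _) Finset.univ_nonempty
  set S : XA → XA → ℝ := fun a' a => ∑ b, p (a', b) * Real.log (p (a, b) / pA a)
    with hS
  -- Gibbs inequality
  have gibbs : ∀ a' a, S a' a - S a' a' ≤ 0 := by
    intro a' a
    have hb : ∀ b : XB,
        p (a', b) * Real.log (p (a, b) / pA a)
          - p (a', b) * Real.log (p (a', b) / pA a')
        ≤ p (a, b) * pA a' / pA a - p (a', b) := by
      intro b
      have hx : (0:ℝ) < p (a, b) / pA a := div_pos (hp _) (hpA_pos _)
      have hy : (0:ℝ) < p (a', b) / pA a' := div_pos (hp _) (hpA_pos _)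
      have h1 : Real.log (p (a, b) / pA a) - Real.log (p (a', b) / pA a')
          = Real.log ((p (a, b) / pA a) / (p (a', b) / pA a')) :=
        (Real.log_div (ne_of_gt hx) (ne_of_gt hy)).symm
      have h2 : Real.log ((p (a, b) / pA a) / (p (a', b) / pA a'))
          ≤ (p (a, b) / pA a) / (p (a', b) / pA a') - 1 :=
        Real.log_le_sub_one_of_pos (div_pos hx hy)
      have h3 : p (a', b) * (Real.log (p (a, b) / pA a) - Real.log (p (a', b) / pA a'))
          ≤ p (a', b) * ((p (a, b) / pA a) / (p (a', b) / pA a') - 1) := by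
        rw [h1]
        exact mul_le_mul_of_nonneg_left h2 (le_of_lt (hp _))
      have h4 : p (a', b) * ((p (a, b) / pA a) / (p (a', b) / pA a') - 1)
          = p (a, b) * pA a' / pA a - p (a', b) := by
        have hb0 : p (a', b) ≠ 0 := ne_of_gt (hp _)
        have ha0 : pA a ≠ 0 := ne_of_gt (hpA_pos a)
        have ha0' : pA a' ≠ 0 := ne_of_gt (hpA_pos a')
        field_simp
      nlinarith [h3, h4]
    have hsum : S a' a - S a' a' ≤ ∑ b, (p (a, b) * pA a' / pA a - p (a', b)) := by
      rw [hS]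
      simp only [← Finset.sum_sub_distrib]
      exact Finset.sum_le_sum (fun b _ => hb b)
    have hzero : ∑ b, (p (a, b) * pA a' / pA a - p (a', b)) = 0 := by
      have h5 : ∑ b, p (a, b) * pA a' / pA a = (∑ b, p (a, b)) * (pA a' / pA a) := by
        rw [Finset.sum_mul]
        exact Finset.sum_congr rfl (fun b _ => by ring)
      rw [Finset.sum_sub_distrib, h5, ← hpA, ← hpA, mul_comm,
        div_mul_cancel₀ _ (ne_of_gt (hpA_pos a)), sub_self]
    linarith [hsum, hzero.le]
  -- rewrite the double sum
  have h1 : ∑ x' : XA × XB, ∑ x : XA × XB, K x' x * p x' * Real.log (p x / pA x.1)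
      = ∑ a' : XA, ∑ a : XA, KA a' a * S a' a := by
    rw [Fintype.sum_prod_type]
    simp only [hK, Fintype.sum_prod_type, ite_mul, zero_mul, Finset.sum_ite_eq,
      Finset.mem_univ, if_true]
    refine Finset.sum_congr rfl (fun a' _ => ?_)
    rw [Finset.sum_comm]
    refine Finset.sum_congr rfl (fun a _ => ?_)
    rw [hS]
    simp only
    rw [Finset.mul_sum]
    exact Finset.sum_congr rfl (fun b _ => by ring)
  rw [h1, neg_nonneg]
  have h2 : ∀ a', ∑ a, KA a' a * S a' a = ∑ a, KA a' a * (S a' a - S a' a') := by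
    intro a'
    simp only [mul_sub, Finset.sum_sub_distrib, ← Finset.sum_mul, hrow, zero_mul,
      sub_zero]
  refine Finset.sum_nonpos (fun a' _ => ?_)
  rw [h2]
  refine Finset.sum_nonpos (fun a _ => ?_)
  by_cases h : a' = a
  · subst h; simp
  · exact mul_nonpos_of_nonneg_of_nonpos (hoff a' a h) (gibbs a' a)
end

section
/- For communities ω' ⊂ ω, the local EP rate of ω decomposes exactly as ⟨σ̇^ω⟩ = ⟨σ̇^{ω'}⟩ + ⟨σ̇_{K(ω∖ω')}⟩ + d^{ω'} S^{X_ω|X_{ω'}}/dt, where ⟨σ̇_{K(ω∖ω')}⟩ is the global EP rate on X_ω evaluated under the counterfactual rate matrix K(ω∖ω') and d^{ω'} S^{X_ω|X_{ω'}}/dt is the ω'-windowed derivative of the conditional entropy. -/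
open Finset
lemma log_div_self_zero (z : ℝ) : Real.log (z / z) = 0 := by
  rcases eq_or_ne z 0 with h | h
  · simp [h]
  · simp [div_self h]


/-- Exact decomposition of the local EP rate of a community `ω` containing a
sub-community `ω'`:  `⟨σ̇^ω⟩ = ⟨σ̇^{ω'}⟩ + ⟨σ̇_{K(ω∖ω');ω}⟩ + d^{ω'} S^{X_ω|X_{ω'}}/dt`.
The joint space of `ω` is modeled as `X1 × X2`, with `X1` the states of `ω'`
and `X2` those of `ω∖ω'`.  `K1` is the community rate matrix of `ω'` (acting
only on `X1`), `Krest = K(ω∖ω')` the windowed rate matrix of the subsystems in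
`ω∖ω'` (which leave the `X1` coordinate fixed), and `Kω` their sum lifted to
`X1 × X2`.  `q` is the (strictly positive) distribution over `X_ω`, `q1` its
marginal over `X1`.  All rate matrices have non-negative off-diagonal entries,
zero row sums, and mutually positive forward/backward entries, so that every
logarithm appearing is well defined. -/
theorem local_EP_decomposition_nested_communities
    {X1 X2 : Type} [Fintype X1] [Fintype X2] [DecidableEq X1] [DecidableEq X2]
    (K1 : X1 → X1 → ℝ) (Krest : X1 × X2 → X1 × X2 → ℝ)
    (h1off : ∀ a' a, a' ≠ a → 0 ≤ K1 a' a)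
    (h1row : ∀ a', ∑ a, K1 a' a = 0)
    (h1iff : ∀ a' a, a' ≠ a → (0 < K1 a' a ↔ 0 < K1 a a'))
    (hroff : ∀ y' y, y' ≠ y → 0 ≤ Krest y' y)
    (hrrow : ∀ y', ∑ y, Krest y' y = 0)
    (hriff : ∀ y' y, y' ≠ y → (0 < Krest y' y ↔ 0 < Krest y y'))
    (hrfix : ∀ y' y, Krest y' y ≠ 0 → y'.1 = y.1)
    (q : X1 × X2 → ℝ) (hq : ∀ y, 0 < q y) (hq1 : ∑ y, q y = 1)
    (Kω : X1 × X2 → X1 × X2 → ℝ)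
    (hKω : ∀ y' y, Kω y' y = (if y'.2 = y.2 then K1 y'.1 y.1 else 0) + Krest y' y)
    (q1 : X1 → ℝ) (hq1def : ∀ a, q1 a = ∑ b, q (a, b)) :
    (∑ y' : X1 × X2, ∑ y : X1 × X2, if y' = y then 0 else
        Kω y' y * q y' * Real.log (Kω y' y * q y' / (Kω y y' * q y)))
      = (∑ a' : X1, ∑ a : X1, if a' = a then 0 else
          K1 a' a * q1 a' * Real.log (K1 a' a * q1 a' / (K1 a a' * q1 a)))
        + (∑ y' : X1 × X2, ∑ y : X1 × X2, if y' = y then 0 else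
            Krest y' y * q y' * Real.log (Krest y' y * q y' / (Krest y y' * q y)))
        + (-∑ y' : X1 × X2, ∑ y : X1 × X2,
            (if y'.2 = y.2 then K1 y'.1 y.1 else 0) * q y' *
              Real.log (q y / q1 y.1)) := by
  classical
  -- nonemptiness
  have hne : Nonempty (X1 × X2) := by
    by_contra h
    rw [not_nonempty_iff] at h
    simp at hq1
  have hne2 : Nonempty X2 := ⟨hne.some.2⟩
  have hq1pos : ∀ a, 0 < q1 a := by
    intro a
    rw [hq1def]
    exact Finset.sum_pos (fun b _ => hq (a, b)) Finset.univ_nonempty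
  -- Step A: pointwise splitting of the LHS summand
  have key : ∀ y' y : X1 × X2,
      (if y' = y then 0 else Kω y' y * q y' * Real.log (Kω y' y * q y' / (Kω y y' * q y)))
      = (if y'.2 = y.2 then K1 y'.1 y.1 * q y' *
            Real.log (K1 y'.1 y.1 * q y' / (K1 y.1 y'.1 * q y)) else 0)
        + (if y' = y then 0 else
            Krest y' y * q y' * Real.log (Krest y' y * q y' / (Krest y y' * q y))) := by
    intro y' y
    by_cases h : y' = y
    · subst h
      simp [log_div_self_zero]
    · by_cases hb : y'.2 = y.2
      · have ha : y'.1 ≠ y.1 := fun hh => h (Prod.ext hh hb)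
        have hr0 : Krest y' y = 0 := by
          by_contra hc; exact ha (hrfix _ _ hc)
        have hr0' : Krest y y' = 0 := by
          by_contra hc; exact ha (hrfix _ _ hc).symm
        rw [if_neg h, if_neg h, if_pos hb, hKω y' y, hKω y y', if_pos hb, if_pos hb.symm,
          hr0, hr0']
        simp
      · have hr : Kω y' y = Krest y' y := by rw [hKω]; rw [if_neg hb]; ring
        have hr' : Kω y y' = Krest y y' := by rw [hKω]; rw [if_neg (Ne.symm hb)]; ring
        rw [if_neg h, if_neg h, if_neg hb, hr, hr']
        ring
  have stepA : (∑ y' : X1 × X2, ∑ y : X1 × X2, if y' = y then 0 else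
        Kω y' y * q y' * Real.log (Kω y' y * q y' / (Kω y y' * q y)))
      = (∑ y' : X1 × X2, ∑ y : X1 × X2, if y'.2 = y.2 then K1 y'.1 y.1 * q y' *
            Real.log (K1 y'.1 y.1 * q y' / (K1 y.1 y'.1 * q y)) else 0)
        + (∑ y' : X1 × X2, ∑ y : X1 × X2, if y' = y then 0 else
            Krest y' y * q y' * Real.log (Krest y' y * q y' / (Krest y y' * q y))) := by
    rw [← Finset.sum_add_distrib]
    refine Finset.sum_congr rfl fun y' _ => ?_
    rw [← Finset.sum_add_distrib]
    exact Finset.sum_congr rfl fun y _ => key y' y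
  -- collapse the D-sum to a triple sum
  have hDsum : (∑ y' : X1 × X2, ∑ y : X1 × X2, if y'.2 = y.2 then K1 y'.1 y.1 * q y' *
            Real.log (K1 y'.1 y.1 * q y' / (K1 y.1 y'.1 * q y)) else 0)
      = ∑ a' : X1, ∑ b : X2, ∑ a : X1,
          K1 a' a * q (a', b) * Real.log (K1 a' a * q (a', b) / (K1 a a' * q (a, b))) := by
    rw [Fintype.sum_prod_type]
    refine Finset.sum_congr rfl fun a' _ => Finset.sum_congr rfl fun b _ => ?_
    rw [Fintype.sum_prod_type]
    refine Finset.sum_congr rfl fun a _ => ?_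
    simp [Finset.sum_ite_eq]
  -- pointwise log splitting
  have hpt : ∀ a' a : X1, ∀ b : X2,
      K1 a' a * q (a', b) * Real.log (K1 a' a * q (a', b) / (K1 a a' * q (a, b)))
      = K1 a' a * q (a', b) * Real.log (K1 a' a * q1 a' / (K1 a a' * q1 a))
        + K1 a' a * q (a', b) * Real.log (q (a', b) / q1 a')
        - K1 a' a * q (a', b) * Real.log (q (a, b) / q1 a) := by
    intro a' a b
    by_cases hd : a' = a
    · subst hd
      simp [log_div_self_zero]
    · rcases eq_or_lt_of_le (h1off a' a hd) with h0 | hpos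
      · simp [← h0]
      · have hpos' : 0 < K1 a a' := (h1iff a' a hd).mp hpos
        have e1 : K1 a' a ≠ 0 := ne_of_gt hpos
        have e2 : K1 a a' ≠ 0 := ne_of_gt hpos'
        have e3 : q (a', b) ≠ 0 := ne_of_gt (hq _)
        have e4 : q (a, b) ≠ 0 := ne_of_gt (hq _)
        have e5 : q1 a' ≠ 0 := ne_of_gt (hq1pos a')
        have e6 : q1 a ≠ 0 := ne_of_gt (hq1pos a)
        rw [Real.log_div (mul_ne_zero e1 e3) (mul_ne_zero e2 e4),
          Real.log_div (mul_ne_zero e1 e5) (mul_ne_zero e2 e6),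
          Real.log_div e3 e5, Real.log_div e4 e6,
          Real.log_mul e1 e3, Real.log_mul e2 e4, Real.log_mul e1 e5, Real.log_mul e2 e6]
        ring
  -- split triple sum into three pieces
  have hsplit3 : (∑ a' : X1, ∑ b : X2, ∑ a : X1,
          K1 a' a * q (a', b) * Real.log (K1 a' a * q (a', b) / (K1 a a' * q (a, b))))
      = (∑ a' : X1, ∑ b : X2, ∑ a : X1,
          K1 a' a * q (a', b) * Real.log (K1 a' a * q1 a' / (K1 a a' * q1 a)))
        + (∑ a' : X1, ∑ b : X2, ∑ a : X1,
          K1 a' a * q (a', b) * Real.log (q (a', b) / q1 a'))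
        - (∑ a' : X1, ∑ b : X2, ∑ a : X1,
          K1 a' a * q (a', b) * Real.log (q (a, b) / q1 a)) := by
    have h1 : (∑ a' : X1, ∑ b : X2, ∑ a : X1,
          K1 a' a * q (a', b) * Real.log (K1 a' a * q (a', b) / (K1 a a' * q (a, b))))
        = ∑ a' : X1, ∑ b : X2, ∑ a : X1,
            (K1 a' a * q (a', b) * Real.log (K1 a' a * q1 a' / (K1 a a' * q1 a))
              + K1 a' a * q (a', b) * Real.log (q (a', b) / q1 a')
              - K1 a' a * q (a', b) * Real.log (q (a, b) / q1 a)) :=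
      Finset.sum_congr rfl fun a' _ => Finset.sum_congr rfl fun b _ =>
        Finset.sum_congr rfl fun a _ => hpt a' a b
    rw [h1]
    simp only [Finset.sum_add_distrib, Finset.sum_sub_distrib]
  -- the middle piece vanishes
  have hmid : (∑ a' : X1, ∑ b : X2, ∑ a : X1,
          K1 a' a * q (a', b) * Real.log (q (a', b) / q1 a')) = 0 := by
    refine Finset.sum_eq_zero fun a' _ => Finset.sum_eq_zero fun b _ => ?_
    have : (∑ a : X1, K1 a' a * q (a', b) * Real.log (q (a', b) / q1 a'))
        = (∑ a : X1, K1 a' a) * (q (a', b) * Real.log (q (a', b) / q1 a')) := by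
      rw [Finset.sum_mul]
      exact Finset.sum_congr rfl fun a _ => by ring
    rw [this, h1row, zero_mul]
  -- the first piece equals the first RHS term
  have hfirst : (∑ a' : X1, ∑ b : X2, ∑ a : X1,
          K1 a' a * q (a', b) * Real.log (K1 a' a * q1 a' / (K1 a a' * q1 a)))
      = ∑ a' : X1, ∑ a : X1, if a' = a then 0 else
          K1 a' a * q1 a' * Real.log (K1 a' a * q1 a' / (K1 a a' * q1 a)) := by
    refine Finset.sum_congr rfl fun a' _ => ?_
    rw [Finset.sum_comm]
    refine Finset.sum_congr rfl fun a _ => ?_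
    have hcollapse : (∑ b : X2, K1 a' a * q (a', b) *
          Real.log (K1 a' a * q1 a' / (K1 a a' * q1 a)))
        = K1 a' a * q1 a' * Real.log (K1 a' a * q1 a' / (K1 a a' * q1 a)) := by
      have : (∑ b : X2, K1 a' a * q (a', b) *
            Real.log (K1 a' a * q1 a' / (K1 a a' * q1 a)))
          = (∑ b : X2, q (a', b)) * (K1 a' a *
              Real.log (K1 a' a * q1 a' / (K1 a a' * q1 a))) := by
        rw [Finset.sum_mul]
        exact Finset.sum_congr rfl fun b _ => by ring
      rw [this, ← hq1def]
      ring
    rw [hcollapse]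
    by_cases hd : a' = a
    · subst hd
      simp [log_div_self_zero]
    · rw [if_neg hd]
  -- the third piece equals the (inner) third RHS sum
  have hthird : (∑ y' : X1 × X2, ∑ y : X1 × X2,
        (if y'.2 = y.2 then K1 y'.1 y.1 else 0) * q y' * Real.log (q y / q1 y.1))
      = ∑ a' : X1, ∑ b : X2, ∑ a : X1,
          K1 a' a * q (a', b) * Real.log (q (a, b) / q1 a) := by
    rw [Fintype.sum_prod_type]
    refine Finset.sum_congr rfl fun a' _ => Finset.sum_congr rfl fun b _ => ?_
    rw [Fintype.sum_prod_type]
    refine Finset.sum_congr rfl fun a _ => ?_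
    have : ∀ b2 : X2, (if b = b2 then K1 a' a else 0) * q (a', b) *
          Real.log (q (a, b2) / q1 a)
        = if b = b2 then K1 a' a * q (a', b) * Real.log (q (a, b2) / q1 a) else 0 := by
      intro b2; split <;> simp
    rw [Finset.sum_congr rfl fun b2 _ => this b2, Finset.sum_ite_eq]
    simp
  rw [stepA, hDsum, hsplit3, hmid, hfirst, hthird]
  ring
end

section
/- For any community ω, the global EP rate is bounded below by the ω-windowed derivative of the conditional entropy: ⟨σ̇⟩ ≥ d^ω S^{X|X_ω}/dt, and this windowed derivative is itself non-negative. -/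
open Finset

lemma aux_logsub (u v : ℝ) (hu : 0 < u) (hv : 0 < v) :
    u - v ≤ u * Real.log (u / v) := by
  have h := Real.log_le_sub_one_of_pos (div_pos hv hu)
  have h2 : u * Real.log (v / u) ≤ u * (v / u - 1) :=
    mul_le_mul_of_nonneg_left h hu.le
  have h3 : u * (v / u - 1) = v - u := by field_simp
  rw [Real.log_div hu.ne' hv.ne']
  rw [Real.log_div hv.ne' hu.ne'] at h2
  nlinarith

lemma aux_pair_nonneg (u v : ℝ) (hu : 0 ≤ u) (hv : 0 ≤ v) :
    0 ≤ u * Real.log (u / v) + v * Real.log (v / u) := by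
  rcases eq_or_lt_of_le hu with h | h
  · rcases eq_or_lt_of_le hv with h' | h'
    · simp [← h, ← h']
    · simp [← h, div_zero, Real.log_zero]
  rcases eq_or_lt_of_le hv with h' | h'
  · simp [← h', div_zero, Real.log_zero]
  have e : v * Real.log (v / u) = -(v * Real.log (u / v)) := by
    rw [Real.log_div h.ne' h'.ne', Real.log_div h'.ne' h.ne']; ring
  rw [e]
  rcases le_total v u with hle | hle
  · have : 0 ≤ Real.log (u / v) := Real.log_nonneg ((one_le_div h').mpr hle)
    nlinarith
  · have : Real.log (u / v) ≤ 0 :=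
      Real.log_nonpos (by positivity) ((div_le_one h').mpr hle)
    nlinarith

lemma aux_sym_sum_nonneg {α : Type*} [Fintype α] (f : α → α → ℝ)
    (h : ∀ a b, 0 ≤ f a b + f b a) : 0 ≤ ∑ a, ∑ b, f a b := by
  have h2 : 0 ≤ ∑ a, ∑ b, (f a b + f b a) :=
    Finset.sum_nonneg fun a _ => Finset.sum_nonneg fun b _ => h a b
  have h3 : ∑ a, ∑ b, (f a b + f b a) = (∑ a, ∑ b, f a b) + ∑ a, ∑ b, f b a := by
    simp [Finset.sum_add_distrib]
  have h4 : (∑ a : α, ∑ b : α, f b a) = ∑ a, ∑ b, f a b := Finset.sum_comm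
  linarith [h3 ▸ h2, h4]

/-- For any community `ω` of a multipartite process, the global EP rate is
bounded below by the `ω`-windowed derivative of the conditional entropy
`S^{X|X_ω}`, and that windowed derivative is itself non-negative.
The joint space is modeled as `XΩ × XR` (`XΩ` the states of `ω`, `XR` the
rest).  `Kc` is the community rate matrix of `ω` (acting only on `XΩ`) and
`Kr = K(N∖ω)` the windowed rate matrix of the remaining subsystems, which
leave the `ω`-coordinates fixed; the full rate matrix is their sum.  `p` is
the strictly positive joint distribution, `pΩ` its `ω`-marginal.  Both
component rate matrices have non-negative off-diagonal entries, zero row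
sums, and mutually positive forward/backward entries. -/
theorem global_EP_bounded_by_windowed_derivative
    {XΩ XR : Type} [Fintype XΩ] [Fintype XR] [DecidableEq XΩ] [DecidableEq XR]
    (Kc : XΩ → XΩ → ℝ) (Kr : XΩ × XR → XΩ × XR → ℝ)
    (hcoff : ∀ a' a, a' ≠ a → 0 ≤ Kc a' a)
    (hcrow : ∀ a', ∑ a, Kc a' a = 0)
    (hciff : ∀ a' a, a' ≠ a → (0 < Kc a' a ↔ 0 < Kc a a'))
    (hroff : ∀ x' x, x' ≠ x → 0 ≤ Kr x' x)
    (hrrow : ∀ x', ∑ x, Kr x' x = 0)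
    (hriff : ∀ x' x, x' ≠ x → (0 < Kr x' x ↔ 0 < Kr x x'))
    (hrfix : ∀ x' x, Kr x' x ≠ 0 → x'.1 = x.1)
    (p : XΩ × XR → ℝ) (hp : ∀ x, 0 < p x) (hp1 : ∑ x, p x = 1)
    (K : XΩ × XR → XΩ × XR → ℝ)
    (hK : ∀ x' x, K x' x = (if x'.2 = x.2 then Kc x'.1 x.1 else 0) + Kr x' x)
    (pΩ : XΩ → ℝ) (hpΩ : ∀ a, pΩ a = ∑ b, p (a, b)) :
    (-∑ x' : XΩ × XR, ∑ x : XΩ × XR,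
        (if x'.2 = x.2 then Kc x'.1 x.1 else 0) * p x' *
          Real.log (p x / pΩ x.1))
      ≤ (∑ x' : XΩ × XR, ∑ x : XΩ × XR, if x' = x then 0 else
          K x' x * p x' * Real.log (K x' x * p x' / (K x x' * p x)))
    ∧ 0 ≤ -∑ x' : XΩ × XR, ∑ x : XΩ × XR,
        (if x'.2 = x.2 then Kc x'.1 x.1 else 0) * p x' *
          Real.log (p x / pΩ x.1) := by
  classical
  -- nonemptiness
  have hne : Nonempty (XΩ × XR) := by
    by_contra h
    rw [not_nonempty_iff] at h
    rw [Finset.univ_eq_empty, Finset.sum_empty] at hp1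
    exact zero_ne_one hp1
  obtain ⟨⟨a0, b0⟩⟩ := hne
  haveI : Nonempty XR := ⟨b0⟩
  haveI : Nonempty XΩ := ⟨a0⟩
  have hpΩpos : ∀ a, 0 < pΩ a := fun a => by
    rw [hpΩ]; exact Finset.sum_pos (fun b _ => hp _) Finset.univ_nonempty
  -- conditional-entropy cross terms
  set F : XΩ → XΩ → ℝ :=
    fun a' a => ∑ b, p (a', b) * Real.log (p (a, b) / pΩ a) with hF
  -- Gibbs inequality
  have hG : ∀ a' a : XΩ, 0 ≤ F a' a' - F a' a := by
    intro a' a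
    have hsub : F a' a' - F a' a = ∑ b, p (a', b) *
        (Real.log (p (a', b) / pΩ a') - Real.log (p (a, b) / pΩ a)) := by
      rw [hF, ← Finset.sum_sub_distrib]
      exact Finset.sum_congr rfl fun b _ => by ring
    rw [hsub]
    have hlow : ∀ b, p (a', b) - pΩ a' / pΩ a * p (a, b) ≤
        p (a', b) * (Real.log (p (a', b) / pΩ a') - Real.log (p (a, b) / pΩ a)) := by
      intro b
      have h1 := aux_logsub (p (a', b) / pΩ a') (p (a, b) / pΩ a)
        (div_pos (hp _) (hpΩpos a')) (div_pos (hp _) (hpΩpos a))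
      have h3 := mul_le_mul_of_nonneg_left h1 (hpΩpos a').le
      have hlog : Real.log ((p (a', b) / pΩ a') / (p (a, b) / pΩ a)) =
          Real.log (p (a', b) / pΩ a') - Real.log (p (a, b) / pΩ a) :=
        Real.log_div (div_pos (hp _) (hpΩpos a')).ne' (div_pos (hp _) (hpΩpos a)).ne'
      rw [hlog] at h3
      have e1 : pΩ a' * (p (a', b) / pΩ a' - p (a, b) / pΩ a)
          = p (a', b) - pΩ a' / pΩ a * p (a, b) := by
        field_simp [(hpΩpos a').ne', (hpΩpos a).ne']
      have e2 : pΩ a' * (p (a', b) / pΩ a' *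
          (Real.log (p (a', b) / pΩ a') - Real.log (p (a, b) / pΩ a)))
          = p (a', b) * (Real.log (p (a', b) / pΩ a') - Real.log (p (a, b) / pΩ a)) := by
        field_simp
        rw [mul_assoc]; congr 1; field_simp [(hpΩpos a').ne']
      linarith [e1 ▸ e2 ▸ h3]
    have hzero : (0:ℝ) = ∑ b, (p (a', b) - pΩ a' / pΩ a * p (a, b)) := by
      rw [Finset.sum_sub_distrib, ← Finset.mul_sum, ← hpΩ, ← hpΩ]
      rw [div_mul_cancel₀ _ (hpΩpos a).ne', sub_self]
    calc (0:ℝ) = ∑ b, (p (a', b) - pΩ a' / pΩ a * p (a, b)) := hzero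
      _ ≤ _ := Finset.sum_le_sum fun b _ => hlow b
  -- rewrite the windowed derivative
  have h1 : (∑ x' : XΩ × XR, ∑ x : XΩ × XR,
      (if x'.2 = x.2 then Kc x'.1 x.1 else 0) * p x' * Real.log (p x / pΩ x.1))
      = ∑ a', ∑ a, Kc a' a * F a' a := by
    rw [Fintype.sum_prod_type]
    refine Finset.sum_congr rfl fun a' _ => ?_
    have inner : ∀ b' : XR, (∑ x : XΩ × XR,
        (if b' = x.2 then Kc a' x.1 else 0) * p (a', b') * Real.log (p x / pΩ x.1))
        = ∑ a, Kc a' a * p (a', b') * Real.log (p (a, b') / pΩ a) := by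
      intro b'
      rw [Fintype.sum_prod_type]
      refine Finset.sum_congr rfl fun a _ => ?_
      simp only [ite_mul, zero_mul]
      rw [Finset.sum_ite_eq]
      simp
    calc (∑ b', ∑ x : XΩ × XR,
          (if b' = x.2 then Kc a' x.1 else 0) * p (a', b') * Real.log (p x / pΩ x.1))
        = ∑ b', ∑ a, Kc a' a * p (a', b') * Real.log (p (a, b') / pΩ a) :=
          Finset.sum_congr rfl fun b' _ => inner b'
      _ = ∑ a, ∑ b', Kc a' a * p (a', b') * Real.log (p (a, b') / pΩ a) :=
          Finset.sum_comm
      _ = ∑ a, Kc a' a * F a' a := by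
          refine Finset.sum_congr rfl fun a _ => ?_
          rw [hF, Finset.mul_sum]
          exact Finset.sum_congr rfl fun b _ => by ring
  have hA : (-∑ x' : XΩ × XR, ∑ x : XΩ × XR,
      (if x'.2 = x.2 then Kc x'.1 x.1 else 0) * p x' * Real.log (p x / pΩ x.1))
      = ∑ a', ∑ a, Kc a' a * (F a' a' - F a' a) := by
    rw [h1]
    have : ∀ a', ∑ a, Kc a' a * (F a' a' - F a' a) = -∑ a, Kc a' a * F a' a := by
      intro a'
      simp only [mul_sub]
      rw [Finset.sum_sub_distrib, ← Finset.sum_mul, hcrow, zero_mul, zero_sub]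
    rw [Finset.sum_congr rfl fun a' _ => this a']
    rw [← Finset.sum_neg_distrib]
  -- second conjunct
  have hA0 : 0 ≤ ∑ a', ∑ a, Kc a' a * (F a' a' - F a' a) := by
    refine Finset.sum_nonneg fun a' _ => Finset.sum_nonneg fun a _ => ?_
    by_cases h : a' = a
    · simp [h]
    · exact mul_nonneg (hcoff a' a h) (hG a' a)
  refine ⟨?_, hA ▸ hA0⟩
  rw [hA]
  -- community and rest parts of the EP rate
  set W : XΩ → XΩ → ℝ := fun a' a => ∑ b,
    Kc a' a * p (a', b) * Real.log (Kc a' a * p (a', b) / (Kc a a' * p (a, b))) with hW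
  set Tr : XΩ × XR → XΩ × XR → ℝ := fun x' x => if x' = x then 0 else
    (if x'.2 = x.2 then 0 else Kr x' x * p x' * Real.log (Kr x' x * p x' / (Kr x x' * p x)))
    with hTr
  set Tc : XΩ × XR → XΩ × XR → ℝ := fun x' x => if x'.2 = x.2 then
    (if x'.1 = x.1 then 0 else
      Kc x'.1 x.1 * p x' * Real.log (Kc x'.1 x.1 * p x' / (Kc x.1 x'.1 * p x))) else 0
    with hTc
  -- split the EP rate
  have hsplit : ∀ x' x : XΩ × XR, (if x' = x then 0 else
      K x' x * p x' * Real.log (K x' x * p x' / (K x x' * p x))) = Tc x' x + Tr x' x := by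
    intro x' x
    by_cases hx : x' = x
    · subst hx; simp [hTc, hTr]
    · by_cases h2 : x'.2 = x.2
      · have h1 : x'.1 ≠ x.1 := fun h => hx (Prod.ext h h2)
        have hr0 : Kr x' x = 0 := by
          by_contra h; exact h1 (hrfix _ _ h)
        have hr0' : Kr x x' = 0 := by
          by_contra h; exact h1 (hrfix _ _ h).symm
        have e1 : K x' x = Kc x'.1 x.1 := by rw [hK]; simp [h2, hr0]
        have e2 : K x x' = Kc x.1 x'.1 := by rw [hK]; simp [h2.symm, hr0']
        simp [hTc, hTr, hx, h1, h2, e1, e2]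
      · have e1 : K x' x = Kr x' x := by rw [hK]; simp [h2]
        have e2 : K x x' = Kr x x' := by
          rw [hK, if_neg (fun h : x.2 = x'.2 => h2 h.symm), zero_add]
        simp [hTc, hTr, hx, h2, e1, e2]
  have hsplit2 : (∑ x' : XΩ × XR, ∑ x : XΩ × XR, if x' = x then 0 else
      K x' x * p x' * Real.log (K x' x * p x' / (K x x' * p x)))
      = (∑ x', ∑ x, Tc x' x) + ∑ x', ∑ x, Tr x' x := by
    rw [← Finset.sum_add_distrib]
    refine Finset.sum_congr rfl fun x' _ => ?_
    rw [← Finset.sum_add_distrib]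
    exact Finset.sum_congr rfl fun x _ => hsplit x' x
  -- the rest part is nonnegative
  have hTr0 : 0 ≤ ∑ x' : XΩ × XR, ∑ x : XΩ × XR, Tr x' x := by
    refine aux_sym_sum_nonneg Tr fun x' x => ?_
    by_cases hx : x' = x
    · simp [hTr, hx]
    · by_cases h2 : x'.2 = x.2
      · simp only [hTr]
        rw [if_neg hx, if_pos h2, if_neg (Ne.symm hx), if_pos h2.symm]
        norm_num
      · simp only [hTr, if_neg hx, if_neg (Ne.symm hx), if_neg h2,
          if_neg (fun h : x.2 = x'.2 => h2 h.symm)]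
        exact aux_pair_nonneg _ _ (mul_nonneg (hroff _ _ hx) (hp _).le)
          (mul_nonneg (hroff _ _ (Ne.symm hx)) (hp _).le)
  -- the community part collapses to a double sum over XΩ
  have hTcsum : (∑ x' : XΩ × XR, ∑ x : XΩ × XR, Tc x' x)
      = ∑ a', ∑ a, (if a' = a then 0 else W a' a) := by
    rw [Fintype.sum_prod_type]
    refine Finset.sum_congr rfl fun a' _ => ?_
    have inner : ∀ b' : XR, (∑ x : XΩ × XR, Tc (a', b') x)
        = ∑ a, (if a' = a then 0 else
          Kc a' a * p (a', b') * Real.log (Kc a' a * p (a', b') / (Kc a a' * p (a, b')))) := by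
      intro b'
      rw [Fintype.sum_prod_type]
      refine Finset.sum_congr rfl fun a _ => ?_
      simp only [hTc]
      rw [Finset.sum_ite_eq]
      simp
    calc (∑ b', ∑ x : XΩ × XR, Tc (a', b') x)
        = ∑ b', ∑ a, (if a' = a then 0 else
            Kc a' a * p (a', b') * Real.log (Kc a' a * p (a', b') / (Kc a a' * p (a, b')))) :=
          Finset.sum_congr rfl fun b' _ => inner b'
      _ = ∑ a, ∑ b', (if a' = a then 0 else
            Kc a' a * p (a', b') * Real.log (Kc a' a * p (a', b') / (Kc a a' * p (a, b')))) :=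
          Finset.sum_comm
      _ = ∑ a, (if a' = a then 0 else W a' a) := by
          refine Finset.sum_congr rfl fun a _ => ?_
          by_cases h : a' = a
          · simp [h]
          · simp only [if_neg h, hW]
  -- the difference between community part and windowed derivative: marginal EP
  have hD : ∀ a' a : XΩ, (if a' = a then 0 else W a' a) - Kc a' a * (F a' a' - F a' a)
      = (if a' = a then 0 else
          Kc a' a * pΩ a' * Real.log (Kc a' a * pΩ a' / (Kc a a' * pΩ a))) := by
    intro a' a
    by_cases h : a' = a
    · simp [h]
    · simp only [if_neg h]
      by_cases hc : Kc a' a = 0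
      · have hc' : Kc a a' = 0 := by
          by_contra hcc
          have : 0 < Kc a a' := lt_of_le_of_ne (hcoff a a' (Ne.symm h)) (Ne.symm hcc)
          exact ((hciff a' a h).mpr this).ne' hc
        simp [hW, hc]
      · have hcpos : 0 < Kc a' a := lt_of_le_of_ne (hcoff a' a h) (Ne.symm hc)
        have hcpos' : 0 < Kc a a' := (hciff a' a h).mp hcpos
        have e1 : Kc a' a * (F a' a' - F a' a) = ∑ b, Kc a' a * (p (a', b) *
            (Real.log (p (a', b) / pΩ a') - Real.log (p (a, b) / pΩ a))) := by
          rw [hF, ← Finset.sum_sub_distrib, Finset.mul_sum]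
          exact Finset.sum_congr rfl fun b _ => by ring
        have hterm : ∀ b : XR,
            Kc a' a * p (a', b) * Real.log (Kc a' a * p (a', b) / (Kc a a' * p (a, b)))
            - Kc a' a * (p (a', b) *
              (Real.log (p (a', b) / pΩ a') - Real.log (p (a, b) / pΩ a)))
            = Kc a' a * p (a', b) * Real.log (Kc a' a * pΩ a' / (Kc a a' * pΩ a)) := by
          intro b
          rw [Real.log_div (mul_pos hcpos (hpΩpos a')).ne' (mul_pos hcpos' (hpΩpos a)).ne',
            Real.log_mul hcpos.ne' (hpΩpos a').ne', Real.log_mul hcpos'.ne' (hpΩpos a).ne',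
            Real.log_div (mul_pos hcpos (hp _)).ne' (mul_pos hcpos' (hp _)).ne',
            Real.log_mul hcpos.ne' (hp _).ne', Real.log_mul hcpos'.ne' (hp _).ne',
            Real.log_div (hp _).ne' (hpΩpos a').ne', Real.log_div (hp _).ne' (hpΩpos a).ne']
          ring
        calc W a' a - Kc a' a * (F a' a' - F a' a)
            = ∑ b, (Kc a' a * p (a', b) *
                Real.log (Kc a' a * p (a', b) / (Kc a a' * p (a, b)))
                - Kc a' a * (p (a', b) *
                  (Real.log (p (a', b) / pΩ a') - Real.log (p (a, b) / pΩ a)))) := by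
              rw [hW, e1, Finset.sum_sub_distrib]
          _ = ∑ b, Kc a' a * p (a', b) * Real.log (Kc a' a * pΩ a' / (Kc a a' * pΩ a)) :=
              Finset.sum_congr rfl fun b _ => hterm b
          _ = Kc a' a * pΩ a' * Real.log (Kc a' a * pΩ a' / (Kc a a' * pΩ a)) := by
              rw [← Finset.sum_mul, ← Finset.mul_sum, ← hpΩ]
  -- marginal EP is nonnegative
  have hE : 0 ≤ ∑ a', ∑ a, (if a' = a then 0 else
      Kc a' a * pΩ a' * Real.log (Kc a' a * pΩ a' / (Kc a a' * pΩ a))) := by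
    refine aux_sym_sum_nonneg _ fun a' a => ?_
    by_cases h : a' = a
    · simp [h]
    · simp only [if_neg h, if_neg (Ne.symm h)]
      exact aux_pair_nonneg _ _ (mul_nonneg (hcoff _ _ h) (hpΩpos _).le)
        (mul_nonneg (hcoff _ _ (Ne.symm h)) (hpΩpos _).le)
  have hdiff : (∑ a', ∑ a, (if a' = a then 0 else W a' a))
      - (∑ a', ∑ a, Kc a' a * (F a' a' - F a' a))
      = ∑ a', ∑ a, (if a' = a then 0 else
          Kc a' a * pΩ a' * Real.log (Kc a' a * pΩ a' / (Kc a a' * pΩ a))) := by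
    rw [← Finset.sum_sub_distrib]
    refine Finset.sum_congr rfl fun a' _ => ?_
    rw [← Finset.sum_sub_distrib]
    exact Finset.sum_congr rfl fun a _ => hD a' a
  linarith [hsplit2, hTr0, hTcsum, hdiff, hE]
end

section
/- Monotonicity of local EP rates under community inclusion: for any two communities ω' ⊆ ω, the local EP rate of ω' is at most that of ω: ⟨σ̇^{ω'}⟩ ≤ ⟨σ̇^{ω}⟩. -/
open Finset

lemma EP_sub_le_mul_log (f g : ℝ) (hf : 0 ≤ f) (hg : 0 < g) :
    f - g ≤ f * Real.log (f / g) := by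
  rcases eq_or_lt_of_le hf with h | h
  · simp [← h]; linarith
  · have h1 : Real.log (g / f) ≤ g / f - 1 := Real.log_le_sub_one_of_pos (by positivity)
    have h2 : Real.log (f / g) = - Real.log (g / f) := by
      rw [← Real.log_inv]; congr 1; field_simp
    have h3 : 1 - g / f ≤ Real.log (f / g) := by rw [h2]; linarith
    have h4 := mul_le_mul_of_nonneg_left h3 h.le
    have h5 : f * (1 - g / f) = f - g := by field_simp
    linarith

lemma EP_log_sum {ι : Type*} (s : Finset ι) (f g : ι → ℝ)
    (hf : ∀ i ∈ s, 0 ≤ f i) (hg : ∀ i ∈ s, 0 < g i) :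
    (∑ i ∈ s, f i) * Real.log ((∑ i ∈ s, f i) / (∑ i ∈ s, g i)) ≤
      ∑ i ∈ s, f i * Real.log (f i / g i) := by
  set F := ∑ i ∈ s, f i with hFdef
  set G := ∑ i ∈ s, g i with hGdef
  have hF0 : 0 ≤ F := Finset.sum_nonneg hf
  rcases eq_or_lt_of_le hF0 with hF | hF
  · have hz : ∀ i ∈ s, f i = 0 := (Finset.sum_eq_zero_iff_of_nonneg hf).1 hF.symm
    have hr : ∑ i ∈ s, f i * Real.log (f i / g i) = 0 :=
      Finset.sum_eq_zero (fun i hi => by rw [hz i hi]; ring)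
    rw [hr, ← hF]; ring_nf; simp
  · have hs : s.Nonempty := by
      by_contra h
      rw [Finset.not_nonempty_iff_eq_empty] at h
      rw [hFdef, h, Finset.sum_empty] at hF; exact lt_irrefl 0 hF
    have hG : 0 < G := Finset.sum_pos hg hs
    have key : ∀ i ∈ s, f i - g i * (F / G) ≤
        f i * Real.log (f i / g i) - f i * Real.log (F / G) := by
      intro i hi
      rcases eq_or_lt_of_le (hf i hi) with h0 | h0
      · have hgi := hg i hi
        have hFG : 0 < F / G := by positivity
        rw [← h0]
        nlinarith
      · have hgi := hg i hi
        have hcore := EP_sub_le_mul_log (f i) (g i * (F / G)) (hf i hi) (by positivity)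
        have hlog : Real.log (f i / (g i * (F / G))) =
            Real.log (f i / g i) - Real.log (F / G) := by
          rw [Real.log_div h0.ne' (by positivity), Real.log_div h0.ne' hgi.ne',
            Real.log_mul hgi.ne' (by positivity)]
          ring
        rw [hlog, mul_sub] at hcore
        exact hcore
    have hsum := Finset.sum_le_sum key
    rw [Finset.sum_sub_distrib, Finset.sum_sub_distrib, ← Finset.sum_mul, ← Finset.sum_mul] at hsum
    have hGF : G * (F / G) = F := by field_simp
    rw [← hFdef, ← hGdef, hGF] at hsum
    linarith

/-- Monotonicity of local EP rates under community inclusion: for communities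
`ω' ⊆ ω`, `⟨σ̇^{ω'}⟩ ≤ ⟨σ̇^{ω}⟩`.  The joint space of `ω` is modeled as
`X1 × X2`, with `X1` the states of `ω'` and `X2` those of `ω∖ω'`.  `K1` is the
community rate matrix of `ω'`, `Krest = K(ω∖ω')` the windowed rate matrix of
the remaining subsystems of `ω` (leaving the `X1` coordinate fixed), and
`Kω` their sum, the community rate matrix of `ω`.  `q` is the strictly
positive distribution over `X_ω` and `q1` its `X1`-marginal.  Both rate
matrices have non-negative off-diagonal entries, zero row sums and mutually
positive forward/backward entries. -/
theorem local_EP_monotone_in_community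
    {X1 X2 : Type} [Fintype X1] [Fintype X2] [DecidableEq X1] [DecidableEq X2]
    (K1 : X1 → X1 → ℝ) (Krest : X1 × X2 → X1 × X2 → ℝ)
    (h1off : ∀ a' a, a' ≠ a → 0 ≤ K1 a' a)
    (h1row : ∀ a', ∑ a, K1 a' a = 0)
    (h1iff : ∀ a' a, a' ≠ a → (0 < K1 a' a ↔ 0 < K1 a a'))
    (hroff : ∀ y' y, y' ≠ y → 0 ≤ Krest y' y)
    (hrrow : ∀ y', ∑ y, Krest y' y = 0)
    (hriff : ∀ y' y, y' ≠ y → (0 < Krest y' y ↔ 0 < Krest y y'))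
    (hrfix : ∀ y' y, Krest y' y ≠ 0 → y'.1 = y.1)
    (q : X1 × X2 → ℝ) (hq : ∀ y, 0 < q y) (hq1 : ∑ y, q y = 1)
    (Kω : X1 × X2 → X1 × X2 → ℝ)
    (hKω : ∀ y' y, Kω y' y = (if y'.2 = y.2 then K1 y'.1 y.1 else 0) + Krest y' y)
    (q1 : X1 → ℝ) (hq1def : ∀ a, q1 a = ∑ b, q (a, b)) :
    (∑ a' : X1, ∑ a : X1, if a' = a then 0 else
        K1 a' a * q1 a' * Real.log (K1 a' a * q1 a' / (K1 a a' * q1 a)))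
      ≤ ∑ y' : X1 × X2, ∑ y : X1 × X2, if y' = y then 0 else
          Kω y' y * q y' * Real.log (Kω y' y * q y' / (Kω y y' * q y)) := by
  classical
  -- abbreviation for the full EP summand
  set T : (X1 × X2) → (X1 × X2) → ℝ := fun y' y =>
    if y' = y then 0 else Kω y' y * q y' * Real.log (Kω y' y * q y' / (Kω y y' * q y)) with hT
  -- the two parts
  set A : ℝ := ∑ y' : X1 × X2, ∑ y : X1 × X2, (if y'.1 = y.1 then 0 else T y' y) with hAdef
  set B : ℝ := ∑ y' : X1 × X2, ∑ y : X1 × X2, (if y'.1 = y.1 then T y' y else 0) with hBdef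
  have hsplit : (∑ y' : X1 × X2, ∑ y : X1 × X2, T y' y) = A + B := by
    rw [hAdef, hBdef, ← Finset.sum_add_distrib]
    refine Finset.sum_congr rfl fun y' _ => ?_
    rw [← Finset.sum_add_distrib]
    refine Finset.sum_congr rfl fun y _ => ?_
    by_cases h : y'.1 = y.1 <;> simp [h]
  -- B is nonnegative
  set Fr : (X1 × X2) → (X1 × X2) → ℝ := fun y' y =>
    if y'.1 = y.1 ∧ y' ≠ y then Krest y' y * q y' else 0 with hFr
  have hBzero : (∑ y' : X1 × X2, ∑ y : X1 × X2, (Fr y' y - Fr y y')) = 0 := by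
    have h1 : (∑ y' : X1 × X2, ∑ y : X1 × X2, Fr y y')
        = ∑ y' : X1 × X2, ∑ y : X1 × X2, Fr y' y := Finset.sum_comm
    simp [Finset.sum_sub_distrib, h1]
  have hBge : 0 ≤ B := by
    rw [← hBzero, hBdef]
    refine Finset.sum_le_sum fun y' _ => Finset.sum_le_sum fun y _ => ?_
    by_cases h1 : y'.1 = y.1
    · by_cases h2 : y' = y
      · simp [hFr, hT, h2]
      · have h2' : y ≠ y' := fun h => h2 h.symm
        have hb2 : y'.2 ≠ y.2 := fun hb => h2 (Prod.ext h1 hb)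
        have hK1 : Kω y' y = Krest y' y := by rw [hKω]; simp [hb2]
        have hK2 : Kω y y' = Krest y y' := by
          have hb2' : ¬ y.2 = y'.2 := fun h => hb2 h.symm
          rw [hKω]; simp [hb2']
        have hFr1 : Fr y' y = Krest y' y * q y' := by simp [hFr, h1, h2]
        have hFr2 : Fr y y' = Krest y y' * q y := by simp [hFr, h1.symm, h2']
        rw [hFr1, hFr2, if_pos h1, hT]
        simp only [if_neg h2, hK1, hK2]
        rcases eq_or_lt_of_le (hroff y' y h2) with hz | hp
        · have hz2 : Krest y y' = 0 := by
            by_contra hne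
            have hpos : 0 < Krest y y' := lt_of_le_of_ne (hroff y y' h2') (Ne.symm hne)
            have := (hriff y y' h2').1 hpos
            rw [← hz] at this; exact lt_irrefl 0 this
          rw [← hz, hz2]; simp
        · have hp' : 0 < Krest y y' := (hriff y' y h2).1 hp
          exact EP_sub_le_mul_log _ _ (mul_pos hp (hq y')).le (mul_pos hp' (hq y))
    · have h1' : y.1 ≠ y'.1 := fun h => h1 h.symm
      simp [hFr, h1, h1']
  -- rewrite A as a triple sum over X1 × X1 × X2
  have hA : A = ∑ a' : X1, ∑ a : X1, ∑ b : X2, (if a' = a then 0 else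
      K1 a' a * q (a', b) * Real.log (K1 a' a * q (a', b) / (K1 a a' * q (a, b)))) := by
    rw [hAdef]
    rw [Fintype.sum_prod_type]
    calc
      (∑ a' : X1, ∑ b' : X2, ∑ y : X1 × X2, (if ((a', b') : X1 × X2).1 = y.1 then 0 else T (a', b') y))
          = ∑ a' : X1, ∑ b' : X2, ∑ a : X1, ∑ b : X2, (if a' = a then 0 else
            if b' = b then K1 a' a * q (a', b') *
              Real.log (K1 a' a * q (a', b') / (K1 a a' * q (a, b))) else 0) := by
        refine Finset.sum_congr rfl fun a' _ => Finset.sum_congr rfl fun b' _ => ?_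
        rw [Fintype.sum_prod_type]
        refine Finset.sum_congr rfl fun a _ => Finset.sum_congr rfl fun b _ => ?_
        by_cases ha : a' = a
        · simp [ha]
        · have hpne : ((a', b') : X1 × X2) ≠ (a, b) := by simp [ha]
          have hr1 : Krest (a', b') (a, b) = 0 := by
            by_contra h; exact ha (hrfix _ _ h)
          have hr2 : Krest (a, b) (a', b') = 0 := by
            by_contra h; exact ha (hrfix _ _ h).symm
          have hk1 : Kω (a', b') (a, b) = if b' = b then K1 a' a else 0 := by
            rw [hKω]; simp [hr1]
          have hk2 : Kω (a, b) (a', b') = if b' = b then K1 a a' else 0 := by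
            rw [hKω]; simp only [hr2, add_zero]
            by_cases hb : b' = b <;> simp [hb, eq_comm]
          rw [hT]
          by_cases hb : b' = b
          · subst hb
            simp [hpne, hk1, hk2, ha]
          · simp [hpne, hk1, hk2, hb, ha]
      _ = ∑ a' : X1, ∑ b' : X2, ∑ a : X1, (if a' = a then 0 else
            K1 a' a * q (a', b') *
              Real.log (K1 a' a * q (a', b') / (K1 a a' * q (a, b')))) := by
        refine Finset.sum_congr rfl fun a' _ => Finset.sum_congr rfl fun b' _ =>
          Finset.sum_congr rfl fun a _ => ?_
        by_cases ha : a' = a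
        · simp [ha]
        · simp [ha, Finset.sum_ite_eq]
      _ = ∑ a' : X1, ∑ a : X1, ∑ b : X2, (if a' = a then 0 else
            K1 a' a * q (a', b) * Real.log (K1 a' a * q (a', b) / (K1 a a' * q (a, b)))) := by
        exact Finset.sum_congr rfl fun a' _ => Finset.sum_comm
  -- marginal EP is at most A
  have hLA : (∑ a' : X1, ∑ a : X1, if a' = a then 0 else
      K1 a' a * q1 a' * Real.log (K1 a' a * q1 a' / (K1 a a' * q1 a))) ≤ A := by
    rw [hA]
    refine Finset.sum_le_sum fun a' _ => Finset.sum_le_sum fun a _ => ?_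
    by_cases ha : a' = a
    · simp [ha]
    · simp only [if_neg ha]
      rcases eq_or_lt_of_le (h1off a' a ha) with hz | hp
      · rw [← hz]; simp
      · have hp' : 0 < K1 a a' := (h1iff a' a ha).1 hp
        have key := EP_log_sum (univ : Finset X2)
          (fun b => K1 a' a * q (a', b)) (fun b => K1 a a' * q (a, b))
          (fun b _ => (mul_pos hp (hq (a', b))).le) (fun b _ => mul_pos hp' (hq (a, b)))
        rw [← Finset.mul_sum, ← Finset.mul_sum, ← hq1def, ← hq1def] at key
        exact key
  have hfin : (∑ y' : X1 × X2, ∑ y : X1 × X2, T y' y)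
      = ∑ y' : X1 × X2, ∑ y : X1 × X2, (if y' = y then 0 else
          Kω y' y * q y' * Real.log (Kω y' y * q y' / (Kω y y' * q y))) := rfl
  rw [← hfin, hsplit]
  linarith
end

section
/- In a stationary multipartite process (dp_x/dt = 0 for all x) with community ω, the ω-windowed derivative of S^{X|X_ω} equals the negative of the (−ω)-windowed derivative of S^{X|X_{−ω}}: d^ω S^{X|X_ω}/dt = −d^{−ω} S^{X|X_{−ω}}/dt, i.e., the bound of the paper reduces to the learning-rate bound. -/
open Finset

/-- In a stationary multipartite process with community `ω`, the `ω`-windowed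
derivative of `S^{X|X_ω}` equals the negative of the `(−ω)`-windowed derivative
of `S^{X|X_{−ω}}` (so the paper's bound reduces to the learning-rate bound).
The joint space is modeled as `XΩ × XR` (`XΩ` the states of `ω`, `XR` those of
`−ω = N∖ω`).  `Kc` is the community rate matrix of `ω` and `Kr = K(−ω)` the
windowed rate matrix of the remaining subsystems (which leave the
`ω`-coordinates fixed); both have zero row sums.  `p` is the strictly positive
joint stationary distribution (`Σ_{x'} K x' x p x' = 0` for the full rate
matrix `K`), with marginals `pΩ`, `pR`. -/
theorem stationary_windowed_derivatives_learning_rate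
    {XΩ XR : Type} [Fintype XΩ] [Fintype XR] [DecidableEq XΩ] [DecidableEq XR]
    (Kc : XΩ → XΩ → ℝ) (Kr : XΩ × XR → XΩ × XR → ℝ)
    (hcrow : ∀ a', ∑ a, Kc a' a = 0)
    (hrrow : ∀ x', ∑ x, Kr x' x = 0)
    (hrfix : ∀ x' x, Kr x' x ≠ 0 → x'.1 = x.1)
    (p : XΩ × XR → ℝ) (hp : ∀ x, 0 < p x) (hp1 : ∑ x, p x = 1)
    (hstat : ∀ x : XΩ × XR,
      ∑ x' : XΩ × XR,
        ((if x'.2 = x.2 then Kc x'.1 x.1 else 0) + Kr x' x) * p x' = 0)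
    (pΩ : XΩ → ℝ) (hpΩ : ∀ a, pΩ a = ∑ b, p (a, b))
    (pR : XR → ℝ) (hpR : ∀ b, pR b = ∑ a, p (a, b)) :
    (-∑ x' : XΩ × XR, ∑ x : XΩ × XR,
        (if x'.2 = x.2 then Kc x'.1 x.1 else 0) * p x' *
          Real.log (p x / pΩ x.1))
      = -(-∑ x' : XΩ × XR, ∑ x : XΩ × XR,
          Kr x' x * p x' * Real.log (p x / pR x.2)) := by
  classical
  have hpΩpos : ∀ x : XΩ × XR, 0 < pΩ x.1 := fun x => by
    rw [hpΩ]
    exact Finset.sum_pos (fun b _ => hp _) ⟨x.2, Finset.mem_univ _⟩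
  have hpRpos : ∀ x : XΩ × XR, 0 < pR x.2 := fun x => by
    rw [hpR]
    exact Finset.sum_pos (fun a _ => hp _) ⟨x.1, Finset.mem_univ _⟩
  -- Dc x = - Dr x
  have hDc : ∀ x : XΩ × XR,
      (∑ x' : XΩ × XR, (if x'.2 = x.2 then Kc x'.1 x.1 else 0) * p x')
        = - ∑ x' : XΩ × XR, Kr x' x * p x' := by
    intro x
    have h := hstat x
    rw [Finset.sum_congr rfl (fun x' _ => add_mul
        (if x'.2 = x.2 then Kc x'.1 x.1 else 0) (Kr x' x) (p x')),
      Finset.sum_add_distrib] at h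
    linarith
  -- A : ∑ Dr · log pΩ = 0
  have hA : ∑ x : XΩ × XR,
      (∑ x' : XΩ × XR, Kr x' x * p x') * Real.log (pΩ x.1) = 0 := by
    have h1 : ∀ x : XΩ × XR,
        (∑ x' : XΩ × XR, Kr x' x * p x') * Real.log (pΩ x.1)
          = ∑ x' : XΩ × XR, Kr x' x * (p x' * Real.log (pΩ x.1)) := by
      intro x
      rw [Finset.sum_mul]
      exact Finset.sum_congr rfl fun x' _ => by ring
    rw [Finset.sum_congr rfl fun x _ => h1 x, Finset.sum_comm]
    refine Finset.sum_eq_zero fun x' _ => ?_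
    have h2 : ∀ x : XΩ × XR, Kr x' x * (p x' * Real.log (pΩ x.1))
        = Kr x' x * (p x' * Real.log (pΩ x'.1)) := by
      intro x
      by_cases h : Kr x' x = 0
      · simp [h]
      · rw [hrfix x' x h]
    rw [Finset.sum_congr rfl fun x _ => h2 x, ← Finset.sum_mul, hrrow, zero_mul]
  -- B : ∑ Dc · log pR = 0
  have hB : ∑ x : XΩ × XR,
      (∑ x' : XΩ × XR, (if x'.2 = x.2 then Kc x'.1 x.1 else 0) * p x')
        * Real.log (pR x.2) = 0 := by
    have h1 : ∀ x : XΩ × XR,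
        (∑ x' : XΩ × XR, (if x'.2 = x.2 then Kc x'.1 x.1 else 0) * p x')
            * Real.log (pR x.2)
          = ∑ x' : XΩ × XR,
              (if x'.2 = x.2 then Kc x'.1 x.1 else 0)
                * (p x' * Real.log (pR x.2)) := by
      intro x
      rw [Finset.sum_mul]
      exact Finset.sum_congr rfl fun x' _ => by ring
    rw [Finset.sum_congr rfl fun x _ => h1 x, Finset.sum_comm]
    refine Finset.sum_eq_zero fun x' _ => ?_
    have h2 : ∀ x : XΩ × XR,
        (if x'.2 = x.2 then Kc x'.1 x.1 else 0) * (p x' * Real.log (pR x.2))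
          = (if x'.2 = x.2 then Kc x'.1 x.1 else 0)
              * (p x' * Real.log (pR x'.2)) := by
      intro x
      by_cases h : x'.2 = x.2
      · rw [h]
      · simp [h]
    rw [Finset.sum_congr rfl fun x _ => h2 x, ← Finset.sum_mul]
    have h3 : (∑ x : XΩ × XR, (if x'.2 = x.2 then Kc x'.1 x.1 else 0)) = 0 := by
      rw [Fintype.sum_prod_type]
      simp [hcrow]
    rw [h3, zero_mul]
  -- rearrange both sides into sums over x
  have hL : (∑ x' : XΩ × XR, ∑ x : XΩ × XR,
        (if x'.2 = x.2 then Kc x'.1 x.1 else 0) * p x' *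
          Real.log (p x / pΩ x.1))
      = ∑ x : XΩ × XR,
          (∑ x' : XΩ × XR, (if x'.2 = x.2 then Kc x'.1 x.1 else 0) * p x')
            * Real.log (p x / pΩ x.1) := by
    rw [Finset.sum_comm]
    exact Finset.sum_congr rfl fun x _ => (Finset.sum_mul _ _ _).symm
  have hR : (∑ x' : XΩ × XR, ∑ x : XΩ × XR,
        Kr x' x * p x' * Real.log (p x / pR x.2))
      = ∑ x : XΩ × XR,
          (∑ x' : XΩ × XR, Kr x' x * p x') * Real.log (p x / pR x.2) := by
    rw [Finset.sum_comm]
    exact Finset.sum_congr rfl fun x _ => (Finset.sum_mul _ _ _).symm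
  rw [hL, hR, neg_neg]
  have e1 : ∀ x : XΩ × XR,
      (∑ x' : XΩ × XR, (if x'.2 = x.2 then Kc x'.1 x.1 else 0) * p x')
          * Real.log (p x / pΩ x.1)
        = -((∑ x' : XΩ × XR, Kr x' x * p x') * Real.log (p x))
            + (∑ x' : XΩ × XR, Kr x' x * p x') * Real.log (pΩ x.1) := by
    intro x
    rw [Real.log_div (hp x).ne' (hpΩpos x).ne', hDc x]
    ring
  have e2 : ∀ x : XΩ × XR,
      (∑ x' : XΩ × XR, Kr x' x * p x') * Real.log (p x / pR x.2)
        = (∑ x' : XΩ × XR, Kr x' x * p x') * Real.log (p x)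
            - (∑ x' : XΩ × XR, Kr x' x * p x') * Real.log (pR x.2) := by
    intro x
    rw [Real.log_div (hp x).ne' (hpRpos x).ne']
    ring
  have hBr : ∑ x : XΩ × XR,
      (∑ x' : XΩ × XR, Kr x' x * p x') * Real.log (pR x.2) = 0 := by
    have : ∀ x : XΩ × XR,
        (∑ x' : XΩ × XR, Kr x' x * p x') * Real.log (pR x.2)
          = -((∑ x' : XΩ × XR, (if x'.2 = x.2 then Kc x'.1 x.1 else 0) * p x')
              * Real.log (pR x.2)) := by
      intro x; rw [hDc x]; ring
    rw [Finset.sum_congr rfl fun x _ => this x, Finset.sum_neg_distrib, hB,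
      neg_zero]
  rw [Finset.sum_congr rfl fun x _ => e1 x, Finset.sum_congr rfl fun x _ => e2 x,
    Finset.sum_add_distrib, Finset.sum_sub_distrib, hA, hBr,
    Finset.sum_neg_distrib]
  ring
end

section
/- Inclusion-exclusion decomposition of the global EP rate: for a community structure N¹ = {ω₁,…,ω_m} covering N, with N^k the multiset of k-fold intersections, the global EP rate equals d/dt[S^N − Σ^S] + Σ^{⟨σ̇⟩}, where Σ^S = Σ_k (−1)^{k+1} Σ_{ω ∈ N^k} S^ω is the inclusion-exclusion sum of marginal entropies and Σ^{⟨σ̇⟩} the inclusion-exclusion sum of local EP rates ⟨σ̇^ω⟩ over all ω ∈ N̄ = ∪_k N^k. -/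
open Finset


section EPAux

variable {N : Type} [Fintype N] [DecidableEq N]
  {X : N → Type} [∀ i, Fintype (X i)] [∀ i, DecidableEq (X i)]

private lemma EP_sum3comm {α β γ : Type*} (s : Finset α) (t : Finset β) (u : Finset γ)
    (f : α → β → γ → ℝ) :
    ∑ a ∈ s, ∑ b ∈ t, ∑ c ∈ u, f a b c = ∑ c ∈ u, ∑ a ∈ s, ∑ b ∈ t, f a b c := by
  calc ∑ a ∈ s, ∑ b ∈ t, ∑ c ∈ u, f a b c
      = ∑ a ∈ s, ∑ c ∈ u, ∑ b ∈ t, f a b c := sum_congr rfl fun a _ => sum_comm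
    _ = ∑ c ∈ u, ∑ a ∈ s, ∑ b ∈ t, f a b c := sum_comm

/-- marginal probability of the window `S` -/
def EPmu (p : (∀ j, X j) → ℝ) (S : Finset N) (x : ∀ j, X j) : ℝ :=
  ∑ y ∈ univ.filter (fun y : ∀ j, X j => ∀ j ∈ S, y j = x j), p y

variable (K : N → (∀ j, X j) → (∀ j, X j) → ℝ) (p : (∀ j, X j) → ℝ)

lemma EPmu_pos (hp : ∀ x, 0 < p x) (S : Finset N) (x : ∀ j, X j) : 0 < EPmu p S x :=
  Finset.sum_pos (fun y _ => hp y) ⟨x, by simp⟩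

lemma EPmu_univ (x : ∀ j, X j) : EPmu p univ x = p x := by
  unfold EPmu
  have h : univ.filter (fun y : ∀ j, X j => ∀ j ∈ (univ : Finset N), y j = x j) = {x} := by
    ext y; simp [funext_iff]
  rw [h, sum_singleton]

lemma EPmu_congr {S : Finset N} {x' x : ∀ j, X j} (h : ∀ j ∈ S, x' j = x j) :
    EPmu p S x' = EPmu p S x := by
  unfold EPmu
  refine sum_congr ?_ (fun _ _ => rfl)
  ext y
  simp only [mem_filter, mem_univ, true_and]
  exact ⟨fun hy j hj => (hy j hj).trans (h j hj), fun hy j hj => (hy j hj).trans (h j hj).symm⟩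

lemma EPkey (hmulti : ∀ i x' x, (∃ j, j ≠ i ∧ x' j ≠ x j) → K i x' x = 0)
    (hoff : ∀ i x' x, x' ≠ x → 0 ≤ K i x' x)
    (hiff : ∀ i x' x, x' ≠ x → (0 < K i x' x ↔ 0 < K i x x'))
    {S : Finset N} {x' x : ∀ j, X j} (hne : x' ≠ x)
    (hKS : ∑ i ∈ S, K i x' x ≠ 0) :
    ∃ i0 ∈ S, (∀ j, j ≠ i0 → x' j = x j) ∧ 0 < K i0 x' x ∧ 0 < K i0 x x' ∧
      (∑ i ∈ S, K i x' x) = K i0 x' x ∧ (∑ i ∈ S, K i x x') = K i0 x x' := by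
  obtain ⟨j0, hj0⟩ : ∃ j0, x' j0 ≠ x j0 := by
    by_contra h; push_neg at h; exact hne (funext h)
  have huniq : ∀ j, j ≠ j0 → x' j = x j := by
    by_contra h; push_neg at h
    obtain ⟨j1, hj1, hj1'⟩ := h
    refine hKS (sum_eq_zero fun i _ => ?_)
    rcases eq_or_ne i j0 with rfl | hij0
    · exact hmulti i x' x ⟨j1, hj1, hj1'⟩
    · exact hmulti i x' x ⟨j0, Ne.symm hij0, hj0⟩
  have hz : ∀ i, i ≠ j0 → K i x' x = 0 := fun i hi => hmulti i x' x ⟨j0, Ne.symm hi, hj0⟩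
  have hz' : ∀ i, i ≠ j0 → K i x x' = 0 :=
    fun i hi => hmulti i x x' ⟨j0, Ne.symm hi, fun h => hj0 h.symm⟩
  have hj0S : j0 ∈ S := by
    by_contra h
    exact hKS (sum_eq_zero fun i hi => hz i (fun e => h (e ▸ hi)))
  have hsum : (∑ i ∈ S, K i x' x) = K j0 x' x :=
    Finset.sum_eq_single_of_mem j0 hj0S (fun i _ hi => hz i hi)
  have hsum' : (∑ i ∈ S, K i x x') = K j0 x x' :=
    Finset.sum_eq_single_of_mem j0 hj0S (fun i _ hi => hz' i hi)
  have hpos : 0 < K j0 x' x :=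
    lt_of_le_of_ne (hoff j0 x' x hne) (by rw [hsum] at hKS; exact Ne.symm hKS)
  exact ⟨j0, hj0S, huniq, hpos, (hiff j0 x' x hne).1 hpos, hsum, hsum'⟩

lemma EP_pair_split (hp : ∀ x, 0 < p x)
    (hmulti : ∀ i x' x, (∃ j, j ≠ i ∧ x' j ≠ x j) → K i x' x = 0)
    (hoff : ∀ i x' x, x' ≠ x → 0 ≤ K i x' x)
    (hiff : ∀ i x' x, x' ≠ x → (0 < K i x' x ↔ 0 < K i x x'))
    (S : Finset N) (x' x : ∀ j, X j) :
    (if x' = x then 0 else (∑ i ∈ S, K i x' x) * p x' *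
        Real.log ((∑ i ∈ S, K i x' x) * EPmu p S x' / ((∑ i ∈ S, K i x x') * EPmu p S x)))
    = (if x' = x then 0 else (∑ i ∈ S, K i x' x) * p x' *
        Real.log ((∑ i ∈ S, K i x' x) / (∑ i ∈ S, K i x x')))
      + (∑ i ∈ S, K i x' x) * p x' *
          (Real.log (EPmu p S x') - Real.log (EPmu p S x)) := by
  rcases eq_or_ne x' x with rfl | hne
  · simp
  rcases eq_or_ne (∑ i ∈ S, K i x' x) 0 with h0 | h0
  · simp [if_neg hne, h0]
  obtain ⟨i0, _, _, hpos, hpos', hsum, hsum'⟩ := EPkey K hmulti hoff hiff hne h0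
  rw [if_neg hne, if_neg hne]
  have h1 : (0:ℝ) < (∑ i ∈ S, K i x' x) := hsum ▸ hpos
  have h2 : (0:ℝ) < (∑ i ∈ S, K i x x') := hsum' ▸ hpos'
  have m1 := EPmu_pos p hp S x'
  have m2 := EPmu_pos p hp S x
  rw [Real.log_div (by positivity) (by positivity), Real.log_mul h1.ne' m1.ne',
      Real.log_mul h2.ne' m2.ne', Real.log_div h1.ne' h2.ne']
  ring

set_option maxHeartbeats 1000000 in
lemma EP_V_eq (hmulti : ∀ i x' x, (∃ j, j ≠ i ∧ x' j ≠ x j) → K i x' x = 0)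
    (hrow : ∀ i x', ∑ x, K i x' x = 0) (S : Finset N) :
    (∑ x' : ∀ j, X j, ∑ x : ∀ j, X j, (∑ i ∈ S, K i x' x) * p x' *
        (Real.log (EPmu p S x') - Real.log (EPmu p S x)))
    = -(∑ x : ∀ j, X j, (∑ x' : ∀ j, X j, ∑ i : N, K i x' x * p x') *
          Real.log (EPmu p S x)) := by
  -- expand the generic windowed drift sum
  have expand : ∀ A : Finset N,
      (∑ x : ∀ j, X j, (∑ x' : ∀ j, X j, ∑ i ∈ A, K i x' x * p x') *
          Real.log (EPmu p S x))
      = ∑ i ∈ A, ∑ x' : ∀ j, X j, ∑ x : ∀ j, X j,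
          K i x' x * p x' * Real.log (EPmu p S x) := by
    intro A
    simp_rw [sum_mul]
    rw [sum_comm]
    exact EP_sum3comm _ _ _ _
  have key0 : ∀ i ∉ S, (∑ x' : ∀ j, X j, ∑ x : ∀ j, X j,
      K i x' x * p x' * Real.log (EPmu p S x)) = 0 := by
    intro i hi
    refine sum_eq_zero fun x' _ => ?_
    have step : (∑ x : ∀ j, X j, K i x' x * p x' * Real.log (EPmu p S x))
        = ∑ x : ∀ j, X j, K i x' x * p x' * Real.log (EPmu p S x') := by
      refine sum_congr rfl fun x _ => ?_
      rcases eq_or_ne (K i x' x) 0 with h0 | h0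
      · simp [h0]
      have hagree : ∀ j, j ≠ i → x' j = x j := by
        intro j hj
        by_contra hne
        exact h0 (hmulti i x' x ⟨j, hj, hne⟩)
      rw [EPmu_congr p (fun j hj => hagree j (fun e => hi (e ▸ hj)))]
    rw [step, ← sum_mul, ← sum_mul, hrow i x', zero_mul, zero_mul]
  have hext : (∑ x : ∀ j, X j, (∑ x' : ∀ j, X j, ∑ i : N, K i x' x * p x') *
        Real.log (EPmu p S x))
      = (∑ x : ∀ j, X j, (∑ x' : ∀ j, X j, ∑ i ∈ S, K i x' x * p x') *
        Real.log (EPmu p S x)) := by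
    rw [expand univ, expand S]
    exact (sum_subset (subset_univ S) (fun i _ hi => key0 i hi)).symm
  -- split the LHS
  have split : (∑ x' : ∀ j, X j, ∑ x : ∀ j, X j, (∑ i ∈ S, K i x' x) * p x' *
        (Real.log (EPmu p S x') - Real.log (EPmu p S x)))
      = (∑ x' : ∀ j, X j, ∑ x : ∀ j, X j,
          (∑ i ∈ S, K i x' x) * p x' * Real.log (EPmu p S x'))
        - (∑ x' : ∀ j, X j, ∑ x : ∀ j, X j,
          (∑ i ∈ S, K i x' x) * p x' * Real.log (EPmu p S x)) := by
    simp_rw [mul_sub, sum_sub_distrib]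
  rw [split]
  have first : (∑ x' : ∀ j, X j, ∑ x : ∀ j, X j,
      (∑ i ∈ S, K i x' x) * p x' * Real.log (EPmu p S x')) = 0 := by
    refine sum_eq_zero fun x' _ => ?_
    have hr : (∑ x : ∀ j, X j, ∑ i ∈ S, K i x' x) = 0 := by
      rw [sum_comm]; exact sum_eq_zero fun i _ => hrow i x'
    calc (∑ x : ∀ j, X j, (∑ i ∈ S, K i x' x) * p x' * Real.log (EPmu p S x'))
        = (∑ x : ∀ j, X j, ∑ i ∈ S, K i x' x) * (p x' * Real.log (EPmu p S x')) := by
          rw [sum_mul]; exact sum_congr rfl fun x _ => by ring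
      _ = 0 := by rw [hr, zero_mul]
  rw [first, hext, zero_sub]
  congr 1
  rw [sum_comm]
  refine sum_congr rfl fun x _ => ?_
  rw [sum_mul]
  exact sum_congr rfl fun x' _ => by rw [sum_mul]

lemma EP_A_additive
    (hmulti : ∀ i x' x, (∃ j, j ≠ i ∧ x' j ≠ x j) → K i x' x = 0)
    (hoff : ∀ i x' x, x' ≠ x → 0 ≤ K i x' x)
    (hiff : ∀ i x' x, x' ≠ x → (0 < K i x' x ↔ 0 < K i x x'))
    (S : Finset N) :
    (∑ x' : ∀ j, X j, ∑ x : ∀ j, X j, if x' = x then 0 else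
        (∑ i ∈ S, K i x' x) * p x' *
          Real.log ((∑ i ∈ S, K i x' x) / (∑ i ∈ S, K i x x')))
    = ∑ i ∈ S, ∑ x' : ∀ j, X j, ∑ x : ∀ j, X j, (if x' = x then 0 else
        K i x' x * p x' * Real.log (K i x' x / K i x x')) := by
  have hpair : ∀ x' x : ∀ j, X j,
      (if x' = x then 0 else (∑ i ∈ S, K i x' x) * p x' *
          Real.log ((∑ i ∈ S, K i x' x) / (∑ i ∈ S, K i x x')))
      = ∑ i ∈ S, (if x' = x then 0 else
          K i x' x * p x' * Real.log (K i x' x / K i x x')) := by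
    intro x' x
    rcases eq_or_ne x' x with rfl | hne
    · simp
    simp only [if_neg hne]
    rcases eq_or_ne (∑ i ∈ S, K i x' x) 0 with h0 | h0
    · have hz : ∀ i ∈ S, K i x' x = 0 :=
        (Finset.sum_eq_zero_iff_of_nonneg (fun i _ => hoff i x' x hne)).1 h0
      rw [h0, zero_mul, zero_mul]
      exact (sum_eq_zero fun i hi => by rw [hz i hi, zero_mul, zero_mul]).symm
    obtain ⟨i0, hi0S, huniq, hpos, hpos', hsum, hsum'⟩ := EPkey K hmulti hoff hiff hne h0
    have hd : x' i0 ≠ x i0 := by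
      intro h
      exact hne (funext fun j => by rcases eq_or_ne j i0 with rfl | hj; exact h; exact huniq j hj)
    rw [hsum, hsum']
    refine (Finset.sum_eq_single_of_mem
      (f := fun i => K i x' x * p x' * Real.log (K i x' x / K i x x'))
      i0 hi0S (fun i _ hi => ?_)).symm
    simp [hmulti i x' x ⟨i0, Ne.symm hi, hd⟩]
  simp_rw [hpair]
  exact EP_sum3comm _ _ _ _

set_option maxHeartbeats 1000000 in
lemma EP_split (hp : ∀ x, 0 < p x)
    (hmulti : ∀ i x' x, (∃ j, j ≠ i ∧ x' j ≠ x j) → K i x' x = 0)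
    (hrow : ∀ i x', ∑ x, K i x' x = 0)
    (hoff : ∀ i x' x, x' ≠ x → 0 ≤ K i x' x)
    (hiff : ∀ i x' x, x' ≠ x → (0 < K i x' x ↔ 0 < K i x x'))
    (S : Finset N) :
    (∑ x' : ∀ j, X j, ∑ x : ∀ j, X j, if x' = x then 0 else
        (∑ i ∈ S, K i x' x) * p x' *
          Real.log ((∑ i ∈ S, K i x' x) * EPmu p S x' /
            ((∑ i ∈ S, K i x x') * EPmu p S x)))
    = (∑ i ∈ S, ∑ x' : ∀ j, X j, ∑ x : ∀ j, X j, (if x' = x then 0 else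
        K i x' x * p x' * Real.log (K i x' x / K i x x')))
      + (-(∑ x : ∀ j, X j, (∑ x' : ∀ j, X j, ∑ i : N, K i x' x * p x') *
            Real.log (EPmu p S x))) := by
  simp_rw [EP_pair_split K p hp hmulti hoff hiff S, sum_add_distrib]
  rw [EP_A_additive K p hmulti hoff hiff S, EP_V_eq K p hmulti hrow S]

end EPAux

lemma EP_neg_one_pow_sum {α : Type*} [DecidableEq α] {s : Finset α} (hs : s.Nonempty) :
    ∑ T ∈ s.powerset.filter (fun T => T.Nonempty), (-1:ℝ) ^ (T.card + 1) = 1 := by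
  have h : (∑ T ∈ s.powerset, (-1:ℤ) ^ T.card) = 0 :=
    Finset.sum_powerset_neg_one_pow_card_of_nonempty hs
  have h' : (∑ T ∈ s.powerset, (-1:ℝ) ^ T.card) = 0 := by
    have := congrArg (fun z : ℤ => (z : ℝ)) h
    push_cast at this
    exact this
  rw [← Finset.sum_filter_add_sum_filter_not s.powerset (fun T => T.Nonempty)] at h'
  have hemp : s.powerset.filter (fun T => ¬ T.Nonempty) = {∅} := by
    ext T
    simp only [mem_filter, Finset.mem_powerset, Finset.not_nonempty_iff_eq_empty,
      Finset.mem_singleton]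
    exact ⟨fun h => h.2, fun h => ⟨h ▸ Finset.empty_subset s, h⟩⟩
  rw [hemp, sum_singleton] at h'
  simp only [Finset.card_empty, pow_zero] at h'
  have h2 : (∑ T ∈ s.powerset.filter (fun T => T.Nonempty), (-1:ℝ) ^ T.card) = -1 := by
    linarith
  calc ∑ T ∈ s.powerset.filter (fun T => T.Nonempty), (-1:ℝ) ^ (T.card + 1)
      = ∑ T ∈ s.powerset.filter (fun T => T.Nonempty), (-1:ℝ) ^ T.card * (-1) := by
        refine sum_congr rfl fun T _ => ?_; rw [pow_succ]
    _ = (∑ T ∈ s.powerset.filter (fun T => T.Nonempty), (-1:ℝ) ^ T.card) * (-1) :=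
        (sum_mul _ _ _).symm
    _ = 1 := by rw [h2]; ring
lemma EP_mem_inf {α β : Type*} [Fintype β] [DecidableEq β] {s : Finset α}
    {f : α → Finset β} {a : β} : a ∈ s.inf f ↔ ∀ i ∈ s, a ∈ f i := by
  induction s using Finset.cons_induction <;> simp [*]

lemma EP_IE {N : Type} [Fintype N] [DecidableEq N] {m : ℕ} (c : Fin m → Finset N)
    (hcover : ∀ i : N, ∃ j, i ∈ c j) (a : N → ℝ) :
    ∑ T ∈ univ.powerset.filter (fun T : Finset (Fin m) => T.Nonempty),
      (-1:ℝ) ^ (T.card + 1) * ∑ i ∈ T.inf c, a i = ∑ i : N, a i := by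
  have h1 : ∀ T : Finset (Fin m), (-1:ℝ) ^ (T.card + 1) * ∑ i ∈ T.inf c, a i
      = ∑ i : N, (if i ∈ T.inf c then (-1:ℝ) ^ (T.card + 1) * a i else 0) := by
    intro T
    rw [Finset.sum_ite_mem, univ_inter, mul_sum]
  simp_rw [h1]
  rw [sum_comm]
  refine sum_congr rfl fun i _ => ?_
  rw [← Finset.sum_filter]
  have hset : ((univ.powerset.filter (fun T : Finset (Fin m) => T.Nonempty)).filter
      (fun T => i ∈ T.inf c))
      = ((univ.filter fun j => i ∈ c j).powerset.filter (fun T => T.Nonempty)) := by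
    ext T
    simp only [Finset.mem_filter, Finset.mem_powerset, Finset.subset_univ, true_and,
      EP_mem_inf, Finset.subset_iff, Finset.mem_univ]
    tauto
  rw [hset, ← Finset.sum_mul, EP_neg_one_pow_sum ?_, one_mul]
  obtain ⟨j, hj⟩ := hcover i
  exact ⟨j, Finset.mem_filter.2 ⟨Finset.mem_univ j, hj⟩⟩


set_option maxHeartbeats 1000000 in
/-- Inclusion-exclusion decomposition of the global EP rate.  `c : Fin m → Finset N`
lists the communities of a community structure `N¹` covering `N`; every
intersection of a nonempty subcollection (the multisets `N^k`) is again a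
community.  The global EP rate equals `d/dt[S^N − Σ^S] + Σ^{⟨σ̇⟩}`, where the
inclusion-exclusion sums run over all nonempty `T ⊆ Fin m` with sign
`(−1)^{|T|+1}` applied to the intersection community `ω_T = ⋂_{j∈T} c j`.
Here, for a community `ω`: `d S^ω/dt = −Σ_x ṗ_x ln p_{x_ω}` with
`ṗ_x = Σ_{x'} Σ_i K i x' x p x'` and `p_{x_ω}` the marginal probability of
`x_ω`; its local EP rate is written (equivalently) as a full-space sum using
the windowed matrix `K(ω) = Σ_{i∈ω} K i` and marginal probabilities. -/
theorem inclusion_exclusion_EP_decomposition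
    {N : Type} [Fintype N] [DecidableEq N]
    (X : N → Type) [∀ i, Fintype (X i)] [∀ i, DecidableEq (X i)]
    (K : N → (∀ j, X j) → (∀ j, X j) → ℝ)
    (p : (∀ j, X j) → ℝ)
    (hp : ∀ x, 0 < p x) (hp1 : ∑ x, p x = 1)
    (hmulti : ∀ i x' x, (∃ j, j ≠ i ∧ x' j ≠ x j) → K i x' x = 0)
    (hrow : ∀ i x', ∑ x, K i x' x = 0)
    (hoff : ∀ i x' x, x' ≠ x → 0 ≤ K i x' x)
    (hiff : ∀ i x' x, x' ≠ x → (0 < K i x' x ↔ 0 < K i x x'))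
    {m : ℕ} (c : Fin m → Finset N)
    (hcover : ∀ i : N, ∃ j, i ∈ c j)
    (hcommunity : ∀ T : Finset (Fin m), T.Nonempty →
      ∀ i ∈ T.inf c, ∀ x' x y' y : ∀ j, X j,
        (∀ j ∈ T.inf c, x' j = y' j) → (∀ j ∈ T.inf c, x j = y j) →
        (∀ j ∉ T.inf c, x' j = x j) → (∀ j ∉ T.inf c, y' j = y j) →
        K i x' x = K i y' y) :
    (∑ x' : ∀ j, X j, ∑ x : ∀ j, X j, if x' = x then 0 else
        (∑ i : N, K i x' x) * p x' *
          Real.log ((∑ i : N, K i x' x) * p x' / ((∑ i : N, K i x x') * p x)))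
    = ((-(∑ x : ∀ j, X j,
            (∑ x' : ∀ j, X j, ∑ i : N, K i x' x * p x') * Real.log (p x)))
        - ∑ T ∈ univ.powerset.filter (fun T : Finset (Fin m) => T.Nonempty),
            (-1 : ℝ) ^ (T.card + 1) *
              (-(∑ x : ∀ j, X j,
                  (∑ x' : ∀ j, X j, ∑ i : N, K i x' x * p x') *
                    Real.log (∑ y ∈ univ.filter
                      (fun y : ∀ j, X j => ∀ j ∈ T.inf c, y j = x j), p y))))
      + ∑ T ∈ univ.powerset.filter (fun T : Finset (Fin m) => T.Nonempty),
          (-1 : ℝ) ^ (T.card + 1) *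
            (∑ x' : ∀ j, X j, ∑ x : ∀ j, X j, if x' = x then 0 else
              (∑ i ∈ T.inf c, K i x' x) * p x' *
                Real.log ((∑ i ∈ T.inf c, K i x' x) *
                    (∑ y ∈ univ.filter
                      (fun y : ∀ j, X j => ∀ j ∈ T.inf c, y j = x' j), p y) /
                  ((∑ i ∈ T.inf c, K i x x') *
                    (∑ y ∈ univ.filter
                      (fun y : ∀ j, X j => ∀ j ∈ T.inf c, y j = x j), p y)))) := by
  have hfold : ∀ (S : Finset N) (x : ∀ j, X j),
      (∑ y ∈ univ.filter (fun y : ∀ j, X j => ∀ j ∈ S, y j = x j), p y) = EPmu p S x :=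
    fun _ _ => rfl
  simp only [hfold]
  -- the global EP rate split
  have hglobal := EP_split K p hp hmulti hrow hoff hiff univ
  simp_rw [EPmu_univ] at hglobal
  rw [hglobal]
  -- split each local EP rate
  have h2 : (∑ T ∈ univ.powerset.filter (fun T : Finset (Fin m) => T.Nonempty),
        (-1 : ℝ) ^ (T.card + 1) *
          (∑ x' : ∀ j, X j, ∑ x : ∀ j, X j, if x' = x then 0 else
            (∑ i ∈ T.inf c, K i x' x) * p x' *
              Real.log ((∑ i ∈ T.inf c, K i x' x) * EPmu p (T.inf c) x' /
                ((∑ i ∈ T.inf c, K i x x') * EPmu p (T.inf c) x))))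
      = ∑ T ∈ univ.powerset.filter (fun T : Finset (Fin m) => T.Nonempty),
          (-1 : ℝ) ^ (T.card + 1) *
            ((∑ i ∈ T.inf c, ∑ x' : ∀ j, X j, ∑ x : ∀ j, X j, (if x' = x then 0 else
                K i x' x * p x' * Real.log (K i x' x / K i x x')))
              + (-(∑ x : ∀ j, X j,
                    (∑ x' : ∀ j, X j, ∑ i : N, K i x' x * p x') *
                      Real.log (EPmu p (T.inf c) x)))) :=
    sum_congr rfl fun T _ => by
      rw [EP_split K p hp hmulti hrow hoff hiff (T.inf c)]
  rw [h2]
  have h3 : (∑ T ∈ univ.powerset.filter (fun T : Finset (Fin m) => T.Nonempty),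
        (-1 : ℝ) ^ (T.card + 1) *
          ((∑ i ∈ T.inf c, ∑ x' : ∀ j, X j, ∑ x : ∀ j, X j, (if x' = x then 0 else
              K i x' x * p x' * Real.log (K i x' x / K i x x')))
            + (-(∑ x : ∀ j, X j,
                  (∑ x' : ∀ j, X j, ∑ i : N, K i x' x * p x') *
                    Real.log (EPmu p (T.inf c) x)))))
      - (∑ T ∈ univ.powerset.filter (fun T : Finset (Fin m) => T.Nonempty),
          (-1 : ℝ) ^ (T.card + 1) *
            (-(∑ x : ∀ j, X j,
                (∑ x' : ∀ j, X j, ∑ i : N, K i x' x * p x') *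
                  Real.log (EPmu p (T.inf c) x))))
      = ∑ T ∈ univ.powerset.filter (fun T : Finset (Fin m) => T.Nonempty),
          (-1 : ℝ) ^ (T.card + 1) *
            (∑ i ∈ T.inf c, ∑ x' : ∀ j, X j, ∑ x : ∀ j, X j, (if x' = x then 0 else
                K i x' x * p x' * Real.log (K i x' x / K i x x'))) := by
    rw [← sum_sub_distrib]
    exact sum_congr rfl fun T _ => by ring
  have h4 := EP_IE c hcover (fun i => ∑ x' : ∀ j, X j, ∑ x : ∀ j, X j, (if x' = x then 0 else
      K i x' x * p x' * Real.log (K i x' x / K i x x')))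
  linarith [h3, h4]
end

section
/- The inclusion-exclusion ('in-ex') information can be negative: with six random variables labeled {12, 13, 14, 23, 24, 34}, all almost surely equal to a common random variable with distribution p, and N¹ consisting of the four triples {12,13,14}, {23,24,12}, {34,13,23}, {34,24,14}, the in-ex information Σ^S − S^N equals −3·S(p), which is ≤ 0, and strictly negative whenever p is not a point mass. -/
open Finset

/-- Joint Shannon entropy `S(X_A)` of the subset `A` of six random variables
with joint distribution `P` on `Fin 6 → α`, written via the marginal
probability of the coordinates in `A`. -/
noncomputable def jointEnt {α : Type} [Fintype α] [DecidableEq α]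
    (P : (Fin 6 → α) → ℝ) (A : Finset (Fin 6)) : ℝ :=
  -∑ x : Fin 6 → α,
    P x * Real.log (∑ y ∈ univ.filter (fun y : Fin 6 → α => ∀ i ∈ A, y i = x i), P y)


section Aux
variable {α : Type} [Fintype α] [DecidableEq α]
  (p : α → ℝ) (P : (Fin 6 → α) → ℝ)
  (hP : ∀ x, P x = if ∀ i, x i = x 0 then p (x 0) else 0)

include hP in
lemma sum_const_form (f : (Fin 6 → α) → ℝ) :
    ∑ x : Fin 6 → α, P x * f x = ∑ a : α, p a * f (fun _ => a) := by
  symm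
  have hinj : ∀ a ∈ (univ : Finset α), ∀ b ∈ (univ : Finset α),
      (fun _ : Fin 6 => a) = (fun _ : Fin 6 => b) → a = b :=
    fun a _ b _ h => congrFun h 0
  calc ∑ a : α, p a * f (fun _ => a)
      = ∑ a : α, P (fun _ => a) * f (fun _ => a) := by
        refine Finset.sum_congr rfl fun a _ => ?_
        rw [hP]; simp
    _ = ∑ x ∈ univ.image (fun a : α => (fun _ : Fin 6 => a)),
          P x * f x := (Finset.sum_image (f := fun x => P x * f x) hinj).symm
    _ = ∑ x : Fin 6 → α, P x * f x := by
        refine Finset.sum_subset (subset_univ _) fun x _ hx => ?_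
        have hc : ¬ ∀ i, x i = x 0 := by
          intro hc
          exact hx (by
            simp only [mem_image, mem_univ, true_and]
            exact ⟨x 0, by funext i; exact (hc i).symm⟩)
        rw [hP]; simp [hc]

include hP in
lemma marg (A : Finset (Fin 6)) (hA : A.Nonempty) (a : α) :
    ∑ y ∈ univ.filter (fun y : Fin 6 → α => ∀ i ∈ A, y i = a), P y = p a := by
  obtain ⟨i0, hi0⟩ := hA
  have hmem : (fun _ : Fin 6 => a) ∈
      univ.filter (fun y : Fin 6 → α => ∀ i ∈ A, y i = a) := by simp
  have hz : ∀ y ∈ univ.filter (fun y : Fin 6 → α => ∀ i ∈ A, y i = a),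
      y ≠ (fun _ => a) → P y = 0 := by
    intro y hy hne
    simp only [mem_filter, mem_univ, true_and] at hy
    rw [hP]
    by_cases hc : ∀ i, y i = y 0
    · exact absurd (funext fun i => by rw [hc i, ← hc i0, hy i0 hi0]) hne
    · simp [hc]
  rw [Finset.sum_eq_single_of_mem _ hmem hz, hP]
  simp

include hP in
lemma jointEnt_nonempty (A : Finset (Fin 6)) (hA : A.Nonempty) :
    jointEnt P A = -∑ a, p a * Real.log (p a) := by
  unfold jointEnt
  congr 1
  rw [sum_const_form p P hP]
  refine Finset.sum_congr rfl fun a _ => ?_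
  congr 2
  exact marg p P hP A hA a

include hP in
lemma jointEnt_empty (hp1 : ∑ a, p a = 1) : jointEnt P (∅ : Finset (Fin 6)) = 0 := by
  unfold jointEnt
  have htot : ∑ x : Fin 6 → α, P x = 1 := by
    have h := sum_const_form p P hP (fun _ => 1)
    simpa [hp1] using h
  have h1 : ∀ x : Fin 6 → α,
      (univ.filter (fun y : Fin 6 → α => ∀ i ∈ (∅ : Finset (Fin 6)), y i = x i)) = univ := by
    intro x; ext y; simp
  simp [h1, htot]

end Aux

/-- The inclusion-exclusion ('in-ex') information can be negative.  Six random
variables, indexed `0,…,5` standing for the pairs `12,13,14,23,24,34`, are all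
almost surely equal to a common random variable with distribution `p`.  With
`N¹` the four triples `{12,13,14}, {23,24,12}, {34,13,23}, {34,24,14}`, the
in-ex information `Σ^S − S^N` (the alternating sum of joint entropies of the
`k`-fold intersections, minus the full joint entropy) equals `−3·S(p)`, hence
is `≤ 0`, and is `< 0` whenever `p` is not a point mass. -/
theorem inex_information_can_be_negative
    {α : Type} [Fintype α] [DecidableEq α]
    (p : α → ℝ) (hp : ∀ a, 0 ≤ p a) (hp1 : ∑ a, p a = 1)
    (P : (Fin 6 → α) → ℝ)
    (hP : ∀ x, P x = if ∀ i, x i = x 0 then p (x 0) else 0)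
    (ω1 ω2 ω3 ω4 : Finset (Fin 6))
    (h1 : ω1 = {0, 1, 2}) (h2 : ω2 = {3, 4, 0})
    (h3 : ω3 = {5, 1, 3}) (h4 : ω4 = {5, 4, 2}) :
    ((jointEnt P ω1 + jointEnt P ω2 + jointEnt P ω3 + jointEnt P ω4
        - (jointEnt P (ω1 ∩ ω2) + jointEnt P (ω1 ∩ ω3) + jointEnt P (ω1 ∩ ω4)
            + jointEnt P (ω2 ∩ ω3) + jointEnt P (ω2 ∩ ω4) + jointEnt P (ω3 ∩ ω4))
        + (jointEnt P (ω1 ∩ ω2 ∩ ω3) + jointEnt P (ω1 ∩ ω2 ∩ ω4)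
            + jointEnt P (ω1 ∩ ω3 ∩ ω4) + jointEnt P (ω2 ∩ ω3 ∩ ω4))
        - jointEnt P (ω1 ∩ ω2 ∩ ω3 ∩ ω4))
      - jointEnt P univ)
      = -3 * (-∑ a, p a * Real.log (p a))
    ∧ -3 * (-∑ a, p a * Real.log (p a)) ≤ 0
    ∧ ((¬ ∃ a, p a = 1) → -3 * (-∑ a, p a * Real.log (p a)) < 0) := by
  subst h1 h2 h3 h4
  set S : ℝ := ∑ a, p a * Real.log (p a) with hS
  have hne : ∀ A : Finset (Fin 6), A.Nonempty → jointEnt P A = -S :=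
    fun A hA => jointEnt_nonempty p P hP A hA
  have hemp := jointEnt_empty p P hP hp1
  have e12 : ({0,1,2} : Finset (Fin 6)) ∩ {3,4,0} = {0} := by decide
  have e13 : ({0,1,2} : Finset (Fin 6)) ∩ {5,1,3} = {1} := by decide
  have e14 : ({0,1,2} : Finset (Fin 6)) ∩ {5,4,2} = {2} := by decide
  have e23 : ({3,4,0} : Finset (Fin 6)) ∩ {5,1,3} = {3} := by decide
  have e24 : ({3,4,0} : Finset (Fin 6)) ∩ {5,4,2} = {4} := by decide
  have e34 : ({5,1,3} : Finset (Fin 6)) ∩ {5,4,2} = {5} := by decide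
  have e123 : ({0} : Finset (Fin 6)) ∩ {5,1,3} = ∅ := by decide
  have e124 : ({0} : Finset (Fin 6)) ∩ {5,4,2} = ∅ := by decide
  have e134 : ({1} : Finset (Fin 6)) ∩ {5,4,2} = ∅ := by decide
  have e234 : ({3} : Finset (Fin 6)) ∩ {5,4,2} = ∅ := by decide
  have e1234 : (∅ : Finset (Fin 6)) ∩ {5,4,2} = ∅ := by decide
  rw [e12, e13, e14, e23, e24, e34, e123, e124, e134, e234, e1234]
  have hS0 : ∀ a, p a * Real.log (p a) ≤ 0 := by
    intro a
    have hle1 : p a ≤ 1 := hp1 ▸ Finset.single_le_sum (fun b _ => hp b) (mem_univ a)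
    have := Real.log_nonpos (hp a) hle1
    exact mul_nonpos_of_nonneg_of_nonpos (hp a) this
  have hSle : S ≤ 0 := hS ▸ Finset.sum_nonpos (fun a _ => hS0 a)
  refine ⟨?_, by linarith, ?_⟩
  · rw [hne _ (by decide), hne _ (by decide), hne _ (by decide), hne _ (by decide),
      hne _ (by decide), hne _ (by decide), hne _ (by decide), hne _ (by decide),
      hne _ (by decide), hne _ (by decide), hne _ univ_nonempty, hemp]
    ring
  · intro hnot
    have hex : ∃ a ∈ (univ : Finset α), p a ≠ 0 := by
      by_contra h
      push_neg at h
      have : (1 : ℝ) = 0 := by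
        rw [← hp1]; exact Finset.sum_eq_zero fun a ha => h a ha
      norm_num at this
    obtain ⟨a, _, ha0⟩ := hex
    have ha1 : p a ≠ 1 := fun h => hnot ⟨a, h⟩
    have halt1 : p a < 1 :=
      lt_of_le_of_ne (hp1 ▸ Finset.single_le_sum (fun b _ => hp b) (mem_univ a)) ha1
    have hneg : p a * Real.log (p a) < 0 :=
      mul_neg_of_pos_of_neg (lt_of_le_of_ne (hp a) (Ne.symm ha0))
        (Real.log_neg (lt_of_le_of_ne (hp a) (Ne.symm ha0)) halt1)
    have : S < 0 := by
      rw [hS]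
      calc ∑ b, p b * Real.log (p b)
          < ∑ _b : α, (0 : ℝ) :=
            Finset.sum_lt_sum (fun b _ => hS0 b) ⟨a, mem_univ a, hneg⟩
        _ = 0 := by simp
    linarith
end
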